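/- arXiv:2510.08982 — 7 statements merged into one kernel-verified Lean document; each statement's English description precedes it below -/
import Mathlib

section
/- For t ≥ 1 and any nonnegative measurable function f on ℝⁿ, the pointwise inequality (I_α f)^t ≤ A · I_α[f · (I_α f)^{t-1}] holds everywhere in ℝⁿ, for a constant A depending only on n, α, t. Here I_α f(x) = γ(n,α) ∫ |x-y|^{α-n} f(y) dy is the Riesz potential of order α ∈ (0,n). -/
/-!
Fix `x` and let `μ` be the measure `|x - z|^{α-n} f(z) dz`, so that `I_α f(x) = γ μ(ℝⁿ)`.
If `|z - x| ≥ |y - x|` then `|y - z| ≤ 2 |x - z|`, so the mass of `μ` outside the ball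
`B(x, |y - x|)` is at most `2^{n-α} I_α f(y) / γ`. For a radius `r` splitting the mass of `μ`
in half, every `y ∈ B̄(x, r)` therefore has `I_α f(y) ≥ 2^{α-n} γ μ(ℝⁿ) / 2`, and `B̄(x, r)`
carries at least half of the mass; integrating `(I_α f)^{t-1}` against `μ` over this ball gives
the claim. An infinite `μ` is exhausted from below by finite measures.
-/

open MeasureTheory ENNReal Set Filter

noncomputable section

/-- Euclidean space ℝⁿ. -/
abbrev Rn (n : ℕ) := EuclideanSpace ℝ (Fin n)

/-- The normalizing constant γ(n,α) of the Riesz potential. -/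
noncomputable def rieszConst (n : ℕ) (α : ℝ) : ℝ :=
  Real.Gamma (((n : ℝ) - α) / 2) / (Real.pi ^ ((n : ℝ) / 2) * 2 ^ α * Real.Gamma (α / 2))

/-- The Riesz potential I_α f(x) = γ(n,α) ∫ |x-y|^{α-n} f(y) dy of a nonnegative function. -/
noncomputable def rieszPotential (n : ℕ) (α : ℝ) (f : Rn n → ℝ≥0∞) (x : Rn n) : ℝ≥0∞ :=
  ENNReal.ofReal (rieszConst n α) * ∫⁻ y, ENNReal.ofReal (‖x - y‖ ^ (α - (n : ℝ))) * f y

/-- The Riesz capacity cap_{α,s}(E) = inf{‖f‖_{L^s}^s : f ≥ 0, I_α f ≥ 1 on E}. -/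
noncomputable def rieszCap (n : ℕ) (α s : ℝ) (E : Set (Rn n)) : ℝ≥0∞ :=
  ⨅ (f : Rn n → ℝ≥0∞) (_ : Measurable f ∧ ∀ x ∈ E, 1 ≤ rieszPotential n α f x),
    ∫⁻ y, f y ^ s

/-- The Choquet integral ∫ g dC = ∫₀^∞ C({g > t}) dt. -/
noncomputable def choquet {n : ℕ} (C : Set (Rn n) → ℝ≥0∞) (g : Rn n → ℝ≥0∞) : ℝ≥0∞ :=
  ∫⁻ t in Set.Ioi (0 : ℝ), C {x | ENNReal.ofReal t < g x}

/-- The gauge ‖u‖_F = inf{‖f‖_{L^s}^r : f ≥ 0, I_α f ≥ |u|^{1/r} q.e.} (inf ∅ = ⊤). -/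
noncomputable def Fgauge (n : ℕ) (α s r : ℝ) (u : Rn n → ℝ≥0∞) : ℝ≥0∞ :=
  ⨅ (f : Rn n → ℝ≥0∞)
    (_ : Measurable f ∧
      rieszCap n α s {x | rieszPotential n α f x < u x ^ (1 / r)} = 0),
    (∫⁻ y, f y ^ s) ^ (r / s)

/-- The Wolff potential W_{α,s}μ(x) = ∫₀^∞ (μ(B_t(x))/t^{n-αs})^{1/(s-1)} dt/t. -/
noncomputable def wolff (n : ℕ) (α s : ℝ) (μ : Measure (Rn n)) (x : Rn n) : ℝ≥0∞ :=
  ∫⁻ t in Set.Ioi (0 : ℝ),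
    (μ (Metric.ball x t) / ENNReal.ofReal (t ^ ((n : ℝ) - α * s))) ^ (1 / (s - 1)) /
      ENNReal.ofReal t

/-- The truncated Wolff potential W^R_{α,s}μ(x) = ∫₀^R (μ(B_t(x))/t^{n-αs})^{1/(s-1)} dt/t. -/
noncomputable def wolffT (n : ℕ) (α s R : ℝ) (μ : Measure (Rn n)) (x : Rn n) : ℝ≥0∞ :=
  ∫⁻ t in Set.Ioc (0 : ℝ) R,
    (μ (Metric.ball x t) / ENNReal.ofReal (t ^ ((n : ℝ) - α * s))) ^ (1 / (s - 1)) /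
      ENNReal.ofReal t

/-- The support of a measure: points all of whose balls have positive measure. -/
def measSupport {n : ℕ} (μ : Measure (Rn n)) : Set (Rn n) :=
  {x | ∀ r > 0, 0 < μ (Metric.ball x r)}

open Metric

theorem ENNReal.rpow_eq_mul_rpow_sub_one (a : ℝ≥0∞) {t : ℝ} (ht : 1 ≤ t) :
    a ^ t = a * a ^ (t - 1) := by
  conv_lhs => rw [← add_sub_cancel 1 t]
  rw [ENNReal.rpow_add_of_nonneg _ _ zero_le_one (by linarith), ENNReal.rpow_one]

section MetricMeasure

variable {X : Type*} [PseudoMetricSpace X] [MeasurableSpace X] [OpensMeasurableSpace X]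
  {μ : Measure X}

theorem exists_measure_ball_le_le_measure_closedBall [IsFiniteMeasure μ] (x : X) {c : ℝ≥0∞}
    (hc0 : 0 < c) (hc : c < μ univ) :
    ∃ r : ℝ, μ (ball x r) ≤ c ∧ c ≤ μ (closedBall x r) := by
  set S := {r : ℝ | c ≤ μ (closedBall x r)}
  have hS : S.Nonempty := by
    have h := tendsto_measure_iUnion_atTop (μ := μ)
      (fun a b (hab : a ≤ b) => closedBall_subset_closedBall (x := x) (Nat.cast_le.2 hab))
    rw [iUnion_closedBall_nat] at h
    obtain ⟨k, hk⟩ := (h.eventually_const_lt hc).exists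
    exact ⟨k, hk.le⟩
  have hS_bdd : BddBelow S := by
    refine ⟨0, fun r hr => le_of_not_gt fun hr0 => hc0.not_ge ?_⟩
    have hr' : c ≤ μ (closedBall x r) := hr
    simpa [closedBall_eq_empty.2 hr0] using hr'
  refine ⟨sInf S, ?_, ?_⟩
  · have hunion : ⋃ k : ℕ, closedBall x (sInf S - 1 / (k + 1)) = ball x (sInf S) := by
      ext z
      simp only [mem_iUnion, mem_closedBall, mem_ball]
      constructor
      · rintro ⟨k, hk⟩
        have : (0 : ℝ) < 1 / (k + 1) := by positivity
        linarith
      · intro hz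
        obtain ⟨k, hk⟩ := exists_nat_one_div_lt (sub_pos.2 hz)
        exact ⟨k, by linarith⟩
    have hmono : Monotone fun k : ℕ => closedBall x (sInf S - 1 / (k + 1)) := fun a b hab =>
      closedBall_subset_closedBall (by gcongr)
    rw [← hunion, hmono.measure_iUnion]
    refine iSup_le fun k => le_of_lt (not_le.1 (notMem_of_lt_csInf (s := S) ?_ hS_bdd))
    have : (0 : ℝ) < 1 / (k + 1) := by positivity
    linarith
  · have h := tendsto_measure_biInter_gt (μ := μ) (s := closedBall x) (a := sInf S)
      (fun _ _ => measurableSet_closedBall.nullMeasurableSet)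
      (fun _ _ _ hij => closedBall_subset_closedBall hij)
      ⟨sInf S + 1, by linarith, measure_ne_top _ _⟩
    rw [biInter_gt_closedBall] at h
    refine ge_of_tendsto h (eventually_nhdsWithin_of_forall fun r (hr : sInf S < r) => ?_)
    obtain ⟨s, hs, hsr⟩ := exists_lt_of_csInf_lt hS hr
    exact hs.trans (measure_mono (closedBall_subset_closedBall hsr.le))

theorem measure_univ_rpow_le_lintegral_rpow_of_isFiniteMeasure [IsFiniteMeasure μ] (x : X)
    {κ : ℝ≥0∞} {u : X → ℝ≥0∞} (hu : ∀ y, κ * μ (ball x (dist y x))ᶜ ≤ u y) {t : ℝ}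
    (ht : 1 ≤ t) :
    κ ^ (t - 1) * μ univ ^ t ≤ 2 ^ t * ∫⁻ y, u y ^ (t - 1) ∂μ := by
  have ht1 : 0 ≤ t - 1 := by linarith
  rcases eq_or_ne (μ univ) 0 with h0 | h0
  · simp [h0, ENNReal.zero_rpow_of_pos (by linarith : 0 < t)]
  set c := μ univ / 2
  obtain ⟨r, hball, hclosed⟩ := exists_measure_ball_le_le_measure_closedBall x
    (ENNReal.half_pos h0) (ENNReal.half_lt_self h0 (measure_ne_top μ univ))
  have hcompl : c ≤ μ (ball x r)ᶜ := by
    rw [measure_compl measurableSet_ball (measure_ne_top μ _)]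
    calc c = μ univ - c := (ENNReal.sub_half (measure_ne_top μ univ)).symm
      _ ≤ μ univ - μ (ball x r) := tsub_le_tsub_left hball _
  have hlow : ∀ y ∈ closedBall x r, (κ * c) ^ (t - 1) ≤ u y ^ (t - 1) := fun y hy => by
    gcongr
    refine le_trans ?_ (hu y)
    gcongr
    exact hcompl.trans (measure_mono (compl_subset_compl.2 (ball_subset_ball hy)))
  calc κ ^ (t - 1) * μ univ ^ t = κ ^ (t - 1) * (2 * c) ^ t := by
        rw [ENNReal.mul_div_cancel two_ne_zero ENNReal.ofNat_ne_top]
    _ = 2 ^ t * ((κ * c) ^ (t - 1) * c) := by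
        rw [ENNReal.mul_rpow_of_nonneg _ _ (by linarith), ENNReal.mul_rpow_of_nonneg _ _ ht1,
          ENNReal.rpow_eq_mul_rpow_sub_one c ht]
        ring
    _ ≤ 2 ^ t * ((κ * c) ^ (t - 1) * μ (closedBall x r)) := by gcongr
    _ = 2 ^ t * ∫⁻ y, (closedBall x r).indicator (fun _ => (κ * c) ^ (t - 1)) y ∂μ := by
        rw [lintegral_indicator_const measurableSet_closedBall]
    _ ≤ 2 ^ t * ∫⁻ y, u y ^ (t - 1) ∂μ := by
        gcongr with y
        exact indicator_le hlow y

theorem measure_univ_rpow_le_lintegral_rpow [SFinite μ] (x : X)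
    {κ : ℝ≥0∞} {u : X → ℝ≥0∞} (hu : ∀ y, κ * μ (ball x (dist y x))ᶜ ≤ u y) {t : ℝ}
    (ht : 1 ≤ t) :
    κ ^ (t - 1) * μ univ ^ t ≤ 2 ^ t * ∫⁻ y, u y ^ (t - 1) ∂μ := by
  set ν : ℕ → Measure X := fun N => ∑ k ∈ Finset.range N, sfiniteSeq μ k
  have hν_le : ∀ N, ν N ≤ μ := fun N => Measure.le_iff'.2 fun s => by
    conv_rhs => rw [← sum_sfiniteSeq μ, Measure.sum_apply_of_countable]
    simpa [ν] using ENNReal.sum_le_tsum (f := fun k => sfiniteSeq μ k s) (Finset.range N)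
  have hν_univ : μ univ = ⨆ N, ν N univ := by
    rw [← sum_sfiniteSeq μ, Measure.sum_apply_of_countable, ENNReal.tsum_eq_iSup_nat]
    simp [ν]
  calc κ ^ (t - 1) * μ univ ^ t = ⨆ N, κ ^ (t - 1) * ν N univ ^ t := by
        rw [hν_univ, ← ENNReal.mul_iSup]
        congr 1
        exact (ENNReal.orderIsoRpow t (by linarith)).map_iSup _
    _ ≤ 2 ^ t * ∫⁻ y, u y ^ (t - 1) ∂μ := iSup_le fun N => by
        refine (measure_univ_rpow_le_lintegral_rpow_of_isFiniteMeasure x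
          (fun y => le_trans ?_ (hu y)) ht).trans ?_
        · gcongr
          exact hν_le N
        · gcongr
          exact hν_le N

end MetricMeasure

theorem dist_rpow_le_two_rpow_neg_mul_dist_rpow {X : Type*} [MetricSpace X] {e : ℝ} (he : e ≤ 0)
    {x y z : X} (hyz : y ≠ z) (h : dist y x ≤ dist z x) :
    dist x z ^ e ≤ 2 ^ (-e) * dist y z ^ e := by
  have hpos : 0 < dist y z / 2 := half_pos (dist_pos.2 hyz)
  have hle : dist y z / 2 ≤ dist x z := by
    linarith [dist_triangle y x z, dist_comm z x]
  calc dist x z ^ e ≤ (dist y z / 2) ^ e := Real.rpow_le_rpow_of_nonpos hpos hle he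
    _ = 2 ^ (-e) * dist y z ^ e := by
      rw [Real.div_rpow dist_nonneg zero_le_two, Real.rpow_neg zero_le_two, div_eq_inv_mul]

def rieszMeasure (n : ℕ) (α : ℝ) (f : Rn n → ℝ≥0∞) (x : Rn n) : Measure (Rn n) :=
  volume.withDensity fun z => ENNReal.ofReal (‖x - z‖ ^ (α - (n : ℝ))) * f z

section RieszMeasure

variable {n : ℕ} {α : ℝ} {f : Rn n → ℝ≥0∞}

instance (x : Rn n) : SFinite (rieszMeasure n α f x) := by
  unfold rieszMeasure
  infer_instance

theorem rieszPotential_eq_mul_rieszMeasure_univ (x : Rn n) :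
    rieszPotential n α f x = ENNReal.ofReal (rieszConst n α) * rieszMeasure n α f x univ := by
  rw [rieszMeasure, withDensity_apply _ MeasurableSet.univ, Measure.restrict_univ, rieszPotential]

theorem mul_lintegral_rieszMeasure_le (hf : Measurable f) (x : Rn n) (h : Rn n → ℝ≥0∞) :
    ENNReal.ofReal (rieszConst n α) * ∫⁻ y, h y ∂rieszMeasure n α f x ≤
      rieszPotential n α (fun y => f y * h y) x := by
  unfold rieszPotential
  refine mul_le_mul_right ?_ _
  have hdens : Measurable fun z => ENNReal.ofReal (‖x - z‖ ^ (α - (n : ℝ))) * f z :=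
    ((measurable_const.sub measurable_id).norm.pow_const _).ennreal_ofReal.mul hf
  refine (lintegral_withDensity_le_lintegral_mul _ hdens h).trans_eq ?_
  simp only [Pi.mul_apply, mul_assoc]

theorem rieszConst_mul_rieszMeasure_compl_ball_le (hα : 0 < α) (hαn : α < n) (x y : Rn n) :
    ENNReal.ofReal (rieszConst n α) * rieszMeasure n α f x (ball x (dist y x))ᶜ ≤
      ENNReal.ofReal (2 ^ ((n : ℝ) - α)) * rieszPotential n α f y := by
  have : Nontrivial (Rn n) := by
    apply Module.nontrivial_of_finrank_pos (R := ℝ)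
    rw [finrank_euclideanSpace_fin]
    exact_mod_cast hα.trans hαn
  rw [rieszMeasure, withDensity_apply _ measurableSet_ball.compl, rieszPotential,
    mul_left_comm]
  gcongr
  calc ∫⁻ z in (ball x (dist y x))ᶜ, ENNReal.ofReal (‖x - z‖ ^ (α - n)) * f z
      ≤ ∫⁻ z in (ball x (dist y x))ᶜ,
          ENNReal.ofReal (2 ^ ((n : ℝ) - α)) * (ENNReal.ofReal (‖y - z‖ ^ (α - n)) * f z) := by
        refine setLIntegral_mono_ae' measurableSet_ball.compl ?_
        -- `‖y - z‖ ^ (α - n)` is `0`, not `∞`, at `z = y`; that point is null.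
        filter_upwards [compl_mem_ae_iff.2 (measure_singleton y)] with z hzy hz
        rw [← mul_assoc, ← ENNReal.ofReal_mul (by positivity)]
        gcongr
        rw [← dist_eq_norm, ← dist_eq_norm, show (n : ℝ) - α = -(α - n) by ring]
        exact dist_rpow_le_two_rpow_neg_mul_dist_rpow (by linarith) (Ne.symm hzy)
          (not_lt.1 hz)
    _ = ENNReal.ofReal (2 ^ ((n : ℝ) - α)) *
          ∫⁻ z in (ball x (dist y x))ᶜ, ENNReal.ofReal (‖y - z‖ ^ (α - n)) * f z :=
        lintegral_const_mul' _ _ ENNReal.ofReal_ne_top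
    _ ≤ ENNReal.ofReal (2 ^ ((n : ℝ) - α)) *
          ∫⁻ z, ENNReal.ofReal (‖y - z‖ ^ (α - n)) * f z := by
        gcongr
        exact Measure.restrict_le_self

end RieszMeasure

/-- For t ≥ 1 and any nonnegative measurable f on ℝⁿ, (I_α f)^t ≤ A · I_α[f·(I_α f)^{t-1}]
everywhere, with A depending only on n, α, t. -/
theorem stmt0 (n : ℕ) (α t : ℝ) (hα : 0 < α) (hαn : α < n) (ht : 1 ≤ t) :
    ∃ A : ℝ≥0∞, A ≠ ⊤ ∧ ∀ f : Rn n → ℝ≥0∞, Measurable f → ∀ x : Rn n,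
      rieszPotential n α f x ^ t ≤
        A * rieszPotential n α (fun y => f y * rieszPotential n α f y ^ (t - 1)) x := by
  have ht1 : 0 ≤ t - 1 := by linarith
  set γ := ENNReal.ofReal (rieszConst n α)
  set C := ENNReal.ofReal (2 ^ ((n : ℝ) - α))
  have hCt : C ^ (t - 1) ≠ ⊤ := ENNReal.rpow_ne_top_of_nonneg ht1 ENNReal.ofReal_ne_top
  refine ⟨2 ^ t * C ^ (t - 1),
    ENNReal.mul_ne_top (ENNReal.rpow_ne_top_of_nonneg (by linarith) ENNReal.ofNat_ne_top) hCt,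
    fun f hf x => ?_⟩
  set μ := rieszMeasure n α f x
  have hmain := measure_univ_rpow_le_lintegral_rpow (μ := μ) x
    (rieszConst_mul_rieszMeasure_compl_ball_le hα hαn x) ht
  simp_rw [ENNReal.mul_rpow_of_nonneg _ _ ht1] at hmain
  rw [lintegral_const_mul' _ _ hCt] at hmain
  calc rieszPotential n α f x ^ t = γ * (γ ^ (t - 1) * μ univ ^ t) := by
        rw [rieszPotential_eq_mul_rieszMeasure_univ, ENNReal.mul_rpow_of_nonneg _ _ (by linarith),
          ENNReal.rpow_eq_mul_rpow_sub_one γ ht, mul_assoc]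
    _ ≤ γ * (2 ^ t * (C ^ (t - 1) * ∫⁻ y, rieszPotential n α f y ^ (t - 1) ∂μ)) := by
        gcongr
    _ = 2 ^ t * C ^ (t - 1) * (γ * ∫⁻ y, rieszPotential n α f y ^ (t - 1) ∂μ) := by ring
    _ ≤ _ := by
        gcongr
        exact mul_lintegral_rieszMeasure_le hf x _
end
end

section
/- Let s > 1 and let f₁, f₂ be nonnegative functions in L^s(ℝⁿ). For λ ∈ (0,1), set g = (λ f₁^s + (1-λ) f₂^s)^{1/s}. Then for every x ∈ ℝⁿ, (I_α g(x))^s ≥ λ (I_α f₁(x))^s + (1-λ)(I_α f₂(x))^s, where I_α denotes the Riesz potential of order α ∈ (0,n). -/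
open MeasureTheory ENNReal Set Filter

noncomputable section

/-! For weights `wᵢ`, `N(a) = (∑ wᵢ aᵢ ^ s) ^ (1 / s)` is a weighted `ℓ^s` norm, so Minkowski's
integral inequality `N(∫ u) ≤ ∫ N(u)` holds. Applied to `uᵢ(y) = |x - y| ^ (α - n) fᵢ(y)`, whose
norm is `|x - y| ^ (α - n) g(y)`, it is the claimed inequality after raising to the power `s`.
Minkowski's inequality in turn is Hölder's inequality tested against the dual vector
`(Aᵢ ^ (s - 1))`, where `Aᵢ = ∫ uᵢ`. -/

theorem ENNReal.inner_le_weight_mul_Lp_mul_Lq {ι : Type*} (t : Finset ι) (w f g : ι → ℝ≥0∞)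
    {p q : ℝ} (hpq : p.HolderConjugate q) :
    ∑ i ∈ t, w i * (f i * g i) ≤
      (∑ i ∈ t, w i * f i ^ p) ^ (1 / p) * (∑ i ∈ t, w i * g i ^ q) ^ (1 / q) := by
  have hsplit (i : ι) : w i * (f i * g i) = (w i ^ (1 / p) * f i) * (w i ^ (1 / q) * g i) := by
    rw [mul_mul_mul_comm, ← ENNReal.rpow_add_of_nonneg _ _ (one_div_nonneg.2 hpq.nonneg)
      (one_div_nonneg.2 hpq.symm.nonneg), one_div, one_div, hpq.inv_add_inv_eq_one,
      ENNReal.rpow_one]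
  have hpow {r : ℝ} (hr : 0 < r) (i : ι) (a : ℝ≥0∞) : (w i ^ (1 / r) * a) ^ r = w i * a ^ r := by
    rw [ENNReal.mul_rpow_of_nonneg _ _ hr.le, ← ENNReal.rpow_mul, one_div_mul_cancel hr.ne',
      ENNReal.rpow_one]
  simpa only [hsplit, hpow hpq.pos, hpow hpq.symm.pos] using
    ENNReal.inner_le_Lp_mul_Lq t (fun i ↦ w i ^ (1 / p) * f i) (fun i ↦ w i ^ (1 / q) * g i) hpq

theorem MeasureTheory.sum_lintegral_le_lintegral_sum {α ι : Type*} [MeasurableSpace α]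
    (μ : Measure α) (t : Finset ι) (f : ι → α → ℝ≥0∞) :
    ∑ i ∈ t, ∫⁻ y, f i y ∂μ ≤ ∫⁻ y, ∑ i ∈ t, f i y ∂μ := by
  classical
  induction t using Finset.induction_on with
  | empty => simp
  | insert i t hi ih =>
    simp only [Finset.sum_insert hi]
    exact (add_le_add_right ih _).trans (le_lintegral_add _ _)

def weightedLpNorm {ι : Type*} (t : Finset ι) (w : ι → ℝ≥0∞) (s : ℝ) (a : ι → ℝ≥0∞) : ℝ≥0∞ :=
  (∑ i ∈ t, w i * a i ^ s) ^ (1 / s)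

section weightedLpNorm

variable {ι : Type*} (t : Finset ι) (w : ι → ℝ≥0∞) {s : ℝ}

theorem weightedLpNorm_rpow (hs : s ≠ 0) (a : ι → ℝ≥0∞) :
    weightedLpNorm t w s a ^ s = ∑ i ∈ t, w i * a i ^ s := by
  rw [weightedLpNorm, one_div, ENNReal.rpow_inv_rpow hs]

theorem weightedLpNorm_const_mul (hs : 0 < s) (c : ℝ≥0∞) (a : ι → ℝ≥0∞) :
    weightedLpNorm t w s (fun i ↦ c * a i) = c * weightedLpNorm t w s a := by
  simp only [weightedLpNorm, ENNReal.mul_rpow_of_nonneg _ _ hs.le, mul_left_comm (w _),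
    ← Finset.mul_sum]
  rw [ENNReal.mul_rpow_of_nonneg _ _ (by positivity), ← ENNReal.rpow_mul,
    mul_one_div_cancel hs.ne', ENNReal.rpow_one]

theorem rpow_one_div_mul_le_weightedLpNorm (hs : 0 < s) (a : ι → ℝ≥0∞) {i : ι} (hi : i ∈ t) :
    w i ^ (1 / s) * a i ≤ weightedLpNorm t w s a := by
  calc w i ^ (1 / s) * a i = (w i * a i ^ s) ^ (1 / s) := by
        rw [ENNReal.mul_rpow_of_nonneg _ _ (by positivity), ← ENNReal.rpow_mul,
          mul_one_div_cancel hs.ne', ENNReal.rpow_one]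
    _ ≤ weightedLpNorm t w s a :=
        ENNReal.rpow_le_rpow (Finset.single_le_sum (f := fun j ↦ w j * a j ^ s)
          (fun _ _ ↦ bot_le) hi) (by positivity)

theorem lintegral_weightedLpNorm_eq_top {α : Type*} [MeasurableSpace α] (μ : Measure α)
    (hs : 0 < s) (hw : ∀ i ∈ t, w i ≠ ⊤) (f : ι → α → ℝ≥0∞)
    (h : ∑ i ∈ t, w i * (∫⁻ y, f i y ∂μ) ^ s = ⊤) :
    ∫⁻ y, weightedLpNorm t w s (fun i ↦ f i y) ∂μ = ⊤ := by
  obtain ⟨i, hi, hwf⟩ := ENNReal.sum_eq_top.1 h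
  obtain ⟨hwi, hfi⟩ : w i ≠ 0 ∧ ∫⁻ y, f i y ∂μ = ⊤ := by
    rcases ENNReal.mul_eq_top.1 hwf with ⟨hwi, hf⟩ | ⟨hwi, -⟩
    · exact ⟨hwi, by simpa [ENNReal.rpow_eq_top_iff, hs, hs.not_gt] using hf⟩
    · exact absurd hwi (hw i hi)
  refine top_le_iff.1 ?_
  calc ⊤ = w i ^ (1 / s) * ∫⁻ y, f i y ∂μ := by
        rw [hfi, ENNReal.mul_top (ENNReal.rpow_pos (pos_iff_ne_zero.2 hwi) (hw i hi)).ne']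
    _ ≤ ∫⁻ y, w i ^ (1 / s) * f i y ∂μ := lintegral_const_mul_le _ _
    _ ≤ ∫⁻ y, weightedLpNorm t w s (fun i ↦ f i y) ∂μ :=
        lintegral_mono fun y ↦ rpow_one_div_mul_le_weightedLpNorm t w hs _ hi

theorem rpow_sum_le_mul_lintegral_weightedLpNorm {α : Type*} [MeasurableSpace α]
    (μ : Measure α) {p : ℝ} (hps : p.HolderConjugate s) (f : ι → α → ℝ≥0∞)
    (h : ∑ i ∈ t, w i * (∫⁻ y, f i y ∂μ) ^ s ≠ ⊤) :
    ∑ i ∈ t, w i * (∫⁻ y, f i y ∂μ) ^ s ≤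
      (∑ i ∈ t, w i * (∫⁻ y, f i y ∂μ) ^ s) ^ (1 / p) *
        ∫⁻ y, weightedLpNorm t w s (fun i ↦ f i y) ∂μ := by
  set A : ι → ℝ≥0∞ := fun i ↦ ∫⁻ y, f i y ∂μ
  set T := ∑ i ∈ t, w i * A i ^ s
  have hpow_s (a : ℝ≥0∞) : a ^ s = a ^ (s - 1) * a := by
    simpa only [sub_add_cancel, ENNReal.rpow_one] using
      ENNReal.rpow_add_of_nonneg (x := a) (s - 1) 1 (by linarith [hps.symm.lt]) zero_le_one
  have hpow_p (a : ℝ≥0∞) : (a ^ (s - 1)) ^ p = a ^ s := by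
    rw [← ENNReal.rpow_mul, hps.symm.sub_one_mul_conj]
  calc T = ∑ i ∈ t, w i * A i ^ (s - 1) * A i := by
        refine Finset.sum_congr rfl fun i _ ↦ ?_
        rw [mul_assoc, hpow_s]
    _ ≤ ∑ i ∈ t, ∫⁻ y, w i * A i ^ (s - 1) * f i y ∂μ :=
        Finset.sum_le_sum fun i _ ↦ lintegral_const_mul_le _ _
    _ ≤ ∫⁻ y, ∑ i ∈ t, w i * (A i ^ (s - 1) * f i y) ∂μ := by
        simp only [mul_assoc]
        exact sum_lintegral_le_lintegral_sum μ t _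
    _ ≤ ∫⁻ y, T ^ (1 / p) * weightedLpNorm t w s (fun i ↦ f i y) ∂μ := by
        refine lintegral_mono fun y ↦ ?_
        have holder :=
          ENNReal.inner_le_weight_mul_Lp_mul_Lq t w (fun i ↦ A i ^ (s - 1)) (fun i ↦ f i y) hps
        simp only [hpow_p] at holder
        exact holder
    _ = T ^ (1 / p) * ∫⁻ y, weightedLpNorm t w s (fun i ↦ f i y) ∂μ :=
        lintegral_const_mul' _ _ (ENNReal.rpow_ne_top_of_nonneg (one_div_nonneg.2 hps.nonneg) h)

theorem weightedLpNorm_lintegral_le {α : Type*} [MeasurableSpace α] (μ : Measure α)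
    (hs : 1 < s) (hw : ∀ i ∈ t, w i ≠ ⊤) (f : ι → α → ℝ≥0∞) :
    weightedLpNorm t w s (fun i ↦ ∫⁻ y, f i y ∂μ) ≤
      ∫⁻ y, weightedLpNorm t w s (fun i ↦ f i y) ∂μ := by
  set T := ∑ i ∈ t, w i * (∫⁻ y, f i y ∂μ) ^ s
  set G := ∫⁻ y, weightedLpNorm t w s (fun i ↦ f i y) ∂μ
  change T ^ (1 / s) ≤ G
  rcases eq_or_ne T ⊤ with hT_top | hT_top
  · exact le_top.trans_eq (lintegral_weightedLpNorm_eq_top t w μ (by linarith) hw f hT_top).symm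
  rcases eq_or_ne T 0 with hT0 | hT0
  · rw [hT0, ENNReal.zero_rpow_of_pos (by positivity)]
    exact bot_le
  have hps := (Real.HolderConjugate.conjExponent hs).symm
  have hsplit : T = T ^ (1 / s.conjExponent) * T ^ (1 / s) := by
    rw [← ENNReal.rpow_add _ _ hT0 hT_top, one_div, one_div, hps.inv_add_inv_eq_one,
      ENNReal.rpow_one]
  refine (ENNReal.mul_le_mul_iff_right (ENNReal.rpow_pos (pos_iff_ne_zero.2 hT0) hT_top).ne'
    (ENNReal.rpow_ne_top_of_nonneg (one_div_nonneg.2 hps.nonneg) hT_top)).1 ?_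
  rw [← hsplit]
  exact rpow_sum_le_mul_lintegral_weightedLpNorm t w μ hps f hT_top

end weightedLpNorm

theorem stmt1_general (n : ℕ) (α s : ℝ) (hs : 1 < s) (f₁ f₂ : Rn n → ℝ≥0∞) (l : ℝ) (x : Rn n) :
    ENNReal.ofReal l * rieszPotential n α f₁ x ^ s +
        ENNReal.ofReal (1 - l) * rieszPotential n α f₂ x ^ s ≤
      rieszPotential n α
        (fun y => (ENNReal.ofReal l * f₁ y ^ s + ENNReal.ofReal (1 - l) * f₂ y ^ s) ^ (1 / s))
        x ^ s := by
  have hs0 : 0 < s := by linarith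
  set w : Fin 2 → ℝ≥0∞ := ![ENNReal.ofReal l, ENNReal.ofReal (1 - l)]
  set f : Fin 2 → Rn n → ℝ≥0∞ := ![f₁, f₂]
  calc _ = weightedLpNorm .univ w s (fun i ↦ rieszPotential n α (f i) x) ^ s := by
        simp [weightedLpNorm_rpow _ _ hs0.ne', Fin.sum_univ_two, w, f]
    _ ≤ rieszPotential n α (fun y ↦ weightedLpNorm .univ w s (fun i ↦ f i y)) x ^ s := by
        gcongr
        simp only [rieszPotential, weightedLpNorm_const_mul _ _ hs0]
        gcongr
        have hw (i : Fin 2) : w i ≠ ⊤ := by fin_cases i <;> exact ENNReal.ofReal_ne_top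
        exact (weightedLpNorm_lintegral_le _ _ _ hs (fun i _ ↦ hw i) _).trans_eq
          (by simp only [weightedLpNorm_const_mul _ _ hs0])
    _ = _ := by simp [weightedLpNorm, Fin.sum_univ_two, w, f]

/-- reverse Minkowski for Riesz potentials: for g = (λ f₁^s + (1-λ) f₂^s)^{1/s},
(I_α g(x))^s ≥ λ (I_α f₁(x))^s + (1-λ)(I_α f₂(x))^s. -/
theorem stmt1 (n : ℕ) (α s : ℝ) (hα : 0 < α) (hαn : α < n) (hs : 1 < s)
    (f₁ f₂ : Rn n → ℝ≥0∞) (hf₁ : Measurable f₁) (hf₂ : Measurable f₂)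
    (hf₁L : (∫⁻ y, f₁ y ^ s) < ⊤) (hf₂L : (∫⁻ y, f₂ y ^ s) < ⊤)
    (l : ℝ) (hl : l ∈ Set.Ioo (0 : ℝ) 1) (x : Rn n) :
    ENNReal.ofReal l * rieszPotential n α f₁ x ^ s +
        ENNReal.ofReal (1 - l) * rieszPotential n α f₂ x ^ s ≤
      rieszPotential n α
        (fun y => (ENNReal.ofReal l * f₁ y ^ s + ENNReal.ofReal (1 - l) * f₂ y ^ s) ^ (1 / s))
        x ^ s :=
  stmt1_general n α s hs f₁ f₂ l x
end
end

section
/- Let s > 1, 0 < α < n/s, and let μ be a nonnegative Borel measure on ℝⁿ. Then for every x ∈ ℝⁿ, W_{α,s}μ(x) ≤ 2^{(n-αs)/(s-1)} · sup{ W_{α,s}μ(y) : y ∈ supp(μ) }, where W_{α,s}μ(x) = ∫₀^∞ [μ(B_t(x))/t^{n-αs}]^{1/(s-1)} dt/t is the Wolff potential. -/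
open MeasureTheory ENNReal Set Filter

noncomputable section

/-!
Let `y` be a point of the support of `μ` nearest to `x`. Up to a `μ`-null set, the ball `B_t(x)`
lies in the support, hence in `B_{2t}(y)`, so `μ(B_t(x)) ≤ μ(B_{2t}(y))`. Since the measure `dt/t`
is invariant under `t ↦ 2t`, this gives `W μ(x) ≤ 2^{(n-αs)/(s-1)} W μ(y)`.
-/

open Metric

lemma measSupport_eq_support {n : ℕ} (μ : Measure (Rn n)) : measSupport μ = μ.support := by
  ext x
  exact nhds_basis_ball.mem_measureSupport.symm

lemma measure_ball_le_of_dist_eq_infDist_support {X : Type*} [PseudoMetricSpace X]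
    [MeasurableSpace X] [HereditarilyLindelofSpace X] {μ : Measure X} {x y : X}
    (hxy : dist x y = infDist x μ.support) (t : ℝ) :
    μ (ball x t) ≤ μ (ball y (2 * t)) := by
  refine measure_mono_ae ?_
  filter_upwards [Measure.support_mem_ae] with z hz hzball
  have hzx : dist z x < t := hzball
  have hxyz : dist x y ≤ dist x z := hxy ▸ infDist_le_dist_of_mem hz
  show dist z y < 2 * t
  linarith [dist_triangle z x y, dist_comm x z]

lemma setLIntegral_Ioi_comp_mul_left {c : ℝ} (hc : 0 < c) (f : ℝ → ℝ≥0∞) :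
    ∫⁻ t in Ioi 0, f (c * t) = ENNReal.ofReal c⁻¹ * ∫⁻ t in Ioi 0, f t := by
  have hemb : MeasurableEmbedding (c * ·) :=
    (Homeomorph.mulLeft₀ c hc.ne').toMeasurableEquiv.measurableEmbedding
  calc ∫⁻ t in Ioi 0, f (c * t) = ∫⁻ t in (c * ·) ⁻¹' Ioi 0, f (c * t) := by
        rw [preimage_const_mul_Ioi₀ _ hc, zero_div]
    _ = ∫⁻ t in Ioi 0, f t ∂(Measure.map (c * ·) volume) := by
        rw [hemb.restrict_map, hemb.lintegral_map]
    _ = ENNReal.ofReal c⁻¹ * ∫⁻ t in Ioi 0, f t := by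
        rw [Real.map_volume_mul_left hc.ne', Measure.restrict_smul, lintegral_smul_measure,
          abs_of_pos (inv_pos.2 hc), smul_eq_mul]

lemma setLIntegral_Ioi_comp_mul_left_div {c : ℝ} (hc : 0 < c) (f : ℝ → ℝ≥0∞) :
    ∫⁻ t in Ioi 0, f (c * t) / ENNReal.ofReal t =
      ∫⁻ t in Ioi 0, f t / ENNReal.ofReal t := by
  have hdiv : ∀ t, f (c * t) / ENNReal.ofReal t =
      ENNReal.ofReal c * (f (c * t) / ENNReal.ofReal (c * t)) := fun t => by
    rw [ENNReal.ofReal_mul hc.le, ← mul_div_assoc,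
      ENNReal.mul_div_mul_left _ _ (by simpa using hc) ENNReal.ofReal_ne_top]
  simp_rw [hdiv]
  rw [lintegral_const_mul' _ _ ENNReal.ofReal_ne_top,
    setLIntegral_Ioi_comp_mul_left hc fun u => f u / ENNReal.ofReal u, ← mul_assoc,
    ← ENNReal.ofReal_mul hc.le, mul_inv_cancel₀ hc.ne', ENNReal.ofReal_one, one_mul]

def wolffDensity (n : ℕ) (α s : ℝ) (μ : Measure (Rn n)) (x : Rn n) (t : ℝ) : ℝ≥0∞ :=
  (μ (ball x t) / ENNReal.ofReal (t ^ ((n : ℝ) - α * s))) ^ (1 / (s - 1))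

lemma wolff_eq_setLIntegral_wolffDensity (n : ℕ) (α s : ℝ) (μ : Measure (Rn n)) (x : Rn n) :
    wolff n α s μ x = ∫⁻ t in Ioi 0, wolffDensity n α s μ x t / ENNReal.ofReal t :=
  rfl

lemma wolff_zero_measure {n : ℕ} {α s : ℝ} (hs : 1 < s) (x : Rn n) : wolff n α s 0 x = 0 := by
  simp [wolff, ENNReal.zero_rpow_of_pos (inv_pos.2 (sub_pos.2 hs))]

lemma wolffDensity_le_of_measure_ball_le {n : ℕ} {α s c t : ℝ} {μ ν : Measure (Rn n)}
    {x y : Rn n} (hs : 1 ≤ s) (hc : 0 < c) (ht : 0 < t)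
    (h : μ (ball x t) ≤ ν (ball y (c * t))) :
    wolffDensity n α s μ x t ≤
      ENNReal.ofReal (c ^ (((n : ℝ) - α * s) / (s - 1))) * wolffDensity n α s ν y (c * t) := by
  set β : ℝ := (n : ℝ) - α * s
  have hγ : 0 ≤ 1 / (s - 1) := one_div_nonneg.2 (sub_nonneg.2 hs)
  have hcβ : 0 < c ^ β := Real.rpow_pos_of_pos hc β
  have hscale :
      ENNReal.ofReal ((c * t) ^ β) = ENNReal.ofReal (c ^ β) * ENNReal.ofReal (t ^ β) := by
    rw [Real.mul_rpow hc.le ht.le, ENNReal.ofReal_mul hcβ.le]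
  calc wolffDensity n α s μ x t
      ≤ (ν (ball y (c * t)) / ENNReal.ofReal (t ^ β)) ^ (1 / (s - 1)) := by
        unfold wolffDensity
        gcongr
    _ = (ENNReal.ofReal (c ^ β) * (ν (ball y (c * t)) / ENNReal.ofReal ((c * t) ^ β))) ^
          (1 / (s - 1)) := by
        rw [hscale, ← mul_div_assoc, ENNReal.mul_div_mul_left _ _ (by simpa using hcβ)
          ENNReal.ofReal_ne_top]
    _ = ENNReal.ofReal (c ^ (β / (s - 1))) * wolffDensity n α s ν y (c * t) := by
        rw [ENNReal.mul_rpow_of_nonneg _ _ hγ, ENNReal.ofReal_rpow_of_pos hcβ,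
          ← Real.rpow_mul hc.le, mul_one_div]
        rfl

lemma wolff_le_of_measure_ball_le {n : ℕ} {α s c : ℝ} {μ ν : Measure (Rn n)} {x y : Rn n}
    (hs : 1 ≤ s) (hc : 0 < c) (h : ∀ t > 0, μ (ball x t) ≤ ν (ball y (c * t))) :
    wolff n α s μ x ≤
      ENNReal.ofReal (c ^ (((n : ℝ) - α * s) / (s - 1))) * wolff n α s ν y := by
  calc wolff n α s μ x
      ≤ ∫⁻ t in Ioi 0, ENNReal.ofReal (c ^ (((n : ℝ) - α * s) / (s - 1))) *
          (wolffDensity n α s ν y (c * t) / ENNReal.ofReal t) := by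
        rw [wolff_eq_setLIntegral_wolffDensity]
        refine setLIntegral_mono' measurableSet_Ioi fun t ht => ?_
        rw [← mul_div_assoc]
        gcongr
        exact wolffDensity_le_of_measure_ball_le hs hc ht (h t ht)
    _ = ENNReal.ofReal (c ^ (((n : ℝ) - α * s) / (s - 1))) * wolff n α s ν y := by
        rw [lintegral_const_mul' _ _ ENNReal.ofReal_ne_top, wolff_eq_setLIntegral_wolffDensity,
          setLIntegral_Ioi_comp_mul_left_div hc (wolffDensity n α s ν y)]

theorem stmt2_general (n : ℕ) (α s : ℝ) (hs : 1 < s)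
    (μ : Measure (Rn n)) (x : Rn n) :
    wolff n α s μ x ≤
      ENNReal.ofReal (2 ^ (((n : ℝ) - α * s) / (s - 1))) *
        ⨆ y ∈ measSupport μ, wolff n α s μ y := by
  rw [measSupport_eq_support]
  rcases μ.support.eq_empty_or_nonempty with hempty | hne
  · rw [Measure.support_eq_empty_iff.1 hempty, wolff_zero_measure hs]
    exact zero_le
  obtain ⟨y, hy, hxy⟩ := Measure.isClosed_support.exists_infDist_eq_dist hne x
  calc wolff n α s μ x
      ≤ ENNReal.ofReal (2 ^ (((n : ℝ) - α * s) / (s - 1))) * wolff n α s μ y :=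
        wolff_le_of_measure_ball_le hs.le two_pos
          fun t _ => measure_ball_le_of_dist_eq_infDist_support hxy.symm t
    _ ≤ _ := by
        gcongr
        exact le_biSup (wolff n α s μ) hy

/-- boundedness principle for Wolff potentials. -/
theorem stmt2 (n : ℕ) (α s : ℝ) (hs : 1 < s) (hα : 0 < α) (hαs : α < n / s)
    (μ : Measure (Rn n)) [IsLocallyFiniteMeasure μ] (x : Rn n) :
    wolff n α s μ x ≤
      ENNReal.ofReal (2 ^ (((n : ℝ) - α * s) / (s - 1))) *
        ⨆ y ∈ measSupport μ, wolff n α s μ y :=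
  stmt2_general n α s hs μ x
end
end

section
/- Let s > 1, 0 < α < n/s, and 1 < q < s. There is a constant C > 0 such that for every nonnegative measurable f and every weight w with ‖w‖_{L^q(cap_{α,s})} ≤ 1, one has (∫_{ℝⁿ} (I_α f)^q dcap_{α,s})^{1/q} ≤ C (∫_{ℝⁿ} f^s w^{q-s} dx)^{1/s}, assuming the cases q = 1 and q = s of this inequality (the latter being Maz'ya's capacitary strong type inequality) as hypotheses. -/
open MeasureTheory ENNReal Set Filter

noncomputable section

/-! The exponents `b = (q - s) / s` and `c = q - 1` satisfy `b (1 - θ) + c θ = 0`, so Hölder's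
inequality in the integral defining the potential gives, pointwise,
`I_α f ≤ (I_α (f w^b))^(1 - θ) (I_α (f w^c))^θ`. Hölder's inequality (c) for the Choquet integral
then bounds `∫ (I_α f)^q dcap` by the case `q = s` (b) applied to `f w^b` and the case `q = 1` (a)
applied to `f w^c` with the weight `w^q`; both right-hand sides equal `∫ f^s w^(q - s)`.
This integral does not see `f` where `w = ∞` (and is infinite unless `f = 0` a.e. where `w = 0`);
by (a) the potential of that part of `f` has Choquet integral zero, and sets of zero capacity
can be discarded thanks to Minkowski's inequality. -/

theorem lintegral_const_mul_indicator_rpow_mul_le {X : Type*} [MeasurableSpace X] (μ : Measure X)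
    {s p : ℝ} (hs : 0 ≤ s) {c : ℝ≥0∞} (hc : c ≠ ⊤) (S : Set X) (f w : X → ℝ≥0∞) :
    ∫⁻ x, (c * S.indicator f x) ^ s * w x ^ p ∂μ ≤ c ^ s * ∫⁻ x, f x ^ s * w x ^ p ∂μ := by
  rw [← lintegral_const_mul' _ _ (ENNReal.rpow_ne_top_of_nonneg hs hc)]
  refine lintegral_mono fun x => ?_
  rw [ENNReal.mul_rpow_of_nonneg _ _ hs, mul_assoc]
  gcongr
  exact indicator_le_self _ _ x

section Choquet

variable {n : ℕ} {C : Set (Rn n) → ℝ≥0∞}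

theorem choquet_mono (hC : Monotone C) {g₁ g₂ : Rn n → ℝ≥0∞} (h : g₁ ≤ g₂) :
    choquet C g₁ ≤ choquet C g₂ :=
  lintegral_mono fun _ => hC fun _ hx => hx.trans_le (h _)

theorem mul_le_choquet (hC : Monotone C) (g : Rn n → ℝ≥0∞) (t : ℝ) :
    C {x | ENNReal.ofReal t < g x} * ENNReal.ofReal t ≤ choquet C g :=
  calc C {x | ENNReal.ofReal t < g x} * ENNReal.ofReal t
      = ∫⁻ _ in Ioc 0 t, C {x | ENNReal.ofReal t < g x} := by
        rw [setLIntegral_const, Real.volume_Ioc, sub_zero]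
    _ ≤ ∫⁻ τ in Ioc 0 t, C {x | ENNReal.ofReal τ < g x} :=
        setLIntegral_mono' measurableSet_Ioc fun _ hτ =>
          hC fun _ hx => (ENNReal.ofReal_le_ofReal hτ.2).trans_lt hx
    _ ≤ choquet C g := lintegral_mono_set Ioc_subset_Ioi_self

theorem apply_setOf_lt_eq_zero_of_choquet_eq_zero (hC : Monotone C) {g : Rn n → ℝ≥0∞}
    (hg : choquet C g = 0) {u : ℝ≥0∞} (hu : u ≠ 0) : C {x | u < g x} = 0 := by
  obtain ⟨t, -, ht, htu⟩ := ENNReal.lt_iff_exists_real_btwn.mp (pos_iff_ne_zero.mpr hu)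
  have hmul := mul_le_choquet hC g t
  rw [hg, nonpos_iff_eq_zero, mul_eq_zero, or_iff_left ht.ne'] at hmul
  exact le_antisymm (hmul ▸ hC fun _ hx => htu.trans hx) zero_le

end Choquet

section RieszPotential

variable {n : ℕ} {α : ℝ}

theorem measurable_rieszKernel_mul (x : Rn n) {f : Rn n → ℝ≥0∞} (hf : Measurable f) :
    Measurable fun y => ENNReal.ofReal (‖x - y‖ ^ (α - n)) * f y :=
  ((measurable_const.sub measurable_id).norm.pow_const _).ennreal_ofReal.mul hf

theorem rieszPotential_add {f g : Rn n → ℝ≥0∞} (hf : Measurable f) (x : Rn n) :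
    rieszPotential n α (f + g) x = rieszPotential n α f x + rieszPotential n α g x := by
  simp only [rieszPotential, Pi.add_apply, mul_add,
    lintegral_add_left (measurable_rieszKernel_mul x hf)]

theorem rieszPotential_const_mul {c : ℝ≥0∞} (hc : c ≠ ⊤) (f : Rn n → ℝ≥0∞) (x : Rn n) :
    rieszPotential n α (fun y => c * f y) x = c * rieszPotential n α f x := by
  simp only [rieszPotential, mul_left_comm _ c, lintegral_const_mul' c _ hc]

theorem rieszPotential_le_rpow_mul_rpow {θ b c : ℝ} (hθ : θ ∈ Ioo 0 1)
    (hbc : b * (1 - θ) + c * θ = 0) {g w : Rn n → ℝ≥0∞} (hg : Measurable g) (hw : Measurable w)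
    (hgw : ∀ᵐ y, g y ≠ 0 → w y ≠ 0 ∧ w y ≠ ⊤) (x : Rn n) :
    rieszPotential n α g x ≤
      rieszPotential n α (fun y => g y * w y ^ b) x ^ (1 - θ) *
        rieszPotential n α (fun y => g y * w y ^ c) x ^ θ := by
  obtain ⟨hθ0, hθ1⟩ := hθ
  have hθ1' : 0 < 1 - θ := sub_pos.mpr hθ1
  set k : Rn n → ℝ≥0∞ := fun y => ENNReal.ofReal (‖x - y‖ ^ (α - n))
  have hsplit : ∀ᵐ y, k y * g y
      = (k y * (g y * w y ^ b)) ^ (1 - θ) * (k y * (g y * w y ^ c)) ^ θ := by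
    filter_upwards [hgw] with y hy
    by_cases hgy : g y = 0
    · simp [hgy, ENNReal.zero_rpow_of_pos hθ1']
    obtain ⟨hw0, hwt⟩ := hy hgy
    calc k y * g y = (k y * g y) ^ ((1 - θ) + θ) * w y ^ (b * (1 - θ) + c * θ) := by
          rw [hbc, ENNReal.rpow_zero, mul_one, sub_add_cancel, ENNReal.rpow_one]
      _ = ((k y * g y) ^ (1 - θ) * (w y ^ b) ^ (1 - θ)) * ((k y * g y) ^ θ * (w y ^ c) ^ θ) := by
          rw [ENNReal.rpow_add_of_nonneg _ _ hθ1'.le hθ0.le, ENNReal.rpow_add _ _ hw0 hwt,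
            ENNReal.rpow_mul, ENNReal.rpow_mul]
          ring
      _ = _ := by
          rw [← ENNReal.mul_rpow_of_nonneg _ _ hθ1'.le, ← ENNReal.mul_rpow_of_nonneg _ _ hθ0.le,
            mul_assoc, mul_assoc]
  have hholder : ∫⁻ y, (k y * (g y * w y ^ b)) ^ (1 - θ) * (k y * (g y * w y ^ c)) ^ θ ≤
      (∫⁻ y, k y * (g y * w y ^ b)) ^ (1 - θ) * (∫⁻ y, k y * (g y * w y ^ c)) ^ θ :=
    ENNReal.lintegral_mul_norm_pow_le
      (measurable_rieszKernel_mul x (hg.mul (hw.pow_const b))).aemeasurable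
      (measurable_rieszKernel_mul x (hg.mul (hw.pow_const c))).aemeasurable
      hθ1'.le hθ0.le (sub_add_cancel 1 θ)
  have hconst : ∀ a X Y : ℝ≥0∞, a * (X ^ (1 - θ) * Y ^ θ) = (a * X) ^ (1 - θ) * (a * Y) ^ θ := by
    intro a X Y
    calc a * (X ^ (1 - θ) * Y ^ θ) = a ^ (1 - θ) * a ^ θ * (X ^ (1 - θ) * Y ^ θ) := by
          rw [← ENNReal.rpow_add_of_nonneg _ _ hθ1'.le hθ0.le, sub_add_cancel, ENNReal.rpow_one]
      _ = _ := by
          rw [ENNReal.mul_rpow_of_nonneg _ _ hθ1'.le, ENNReal.mul_rpow_of_nonneg _ _ hθ0.le]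
          ring
  calc rieszPotential n α g x
      = ENNReal.ofReal (rieszConst n α) *
          ∫⁻ y, (k y * (g y * w y ^ b)) ^ (1 - θ) * (k y * (g y * w y ^ c)) ^ θ :=
        congrArg _ (lintegral_congr_ae hsplit)
    _ ≤ _ := (mul_le_mul_right hholder _).trans_eq (hconst _ _ _)

end RieszPotential

section RieszCap

variable {n : ℕ} {α s : ℝ}

theorem rieszCap_le {E : Set (Rn n)} {f : Rn n → ℝ≥0∞} (hf : Measurable f)
    (h : ∀ x ∈ E, 1 ≤ rieszPotential n α f x) : rieszCap n α s E ≤ ∫⁻ y, f y ^ s :=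
  iInf₂_le f ⟨hf, h⟩

theorem monotone_rieszCap : Monotone (rieszCap n α s) :=
  fun _ _ hEF => le_iInf₂ fun _ hf => rieszCap_le hf.1 fun x hx => hf.2 x (hEF hx)

theorem rieszCap_rpow_eq_iInf {r : ℝ} (hr : 0 < r) (E : Set (Rn n)) :
    rieszCap n α s E ^ r = ⨅ (f : Rn n → ℝ≥0∞)
      (_ : Measurable f ∧ ∀ x ∈ E, 1 ≤ rieszPotential n α f x), (∫⁻ y, f y ^ s) ^ r :=
  map_iInf₂ (ENNReal.orderIsoRpow r hr) _

theorem rieszCap_union_rpow_le (hs : 1 ≤ s) (A B : Set (Rn n)) :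
    rieszCap n α s (A ∪ B) ^ (1 / s) ≤
      rieszCap n α s A ^ (1 / s) + rieszCap n α s B ^ (1 / s) := by
  have hs' : 0 < 1 / s := by positivity
  rw [rieszCap_rpow_eq_iInf hs' A, rieszCap_rpow_eq_iInf hs' B]
  refine ENNReal.le_iInf₂_add_iInf₂ fun f ⟨hf, hfA⟩ g ⟨hg, hgB⟩ => ?_
  have hcap : rieszCap n α s (A ∪ B) ≤ ∫⁻ y, (f + g) y ^ s := by
    refine rieszCap_le (hf.add hg) fun x hx => ?_
    rw [rieszPotential_add hf]
    rcases hx with hx | hx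
    · exact (hfA x hx).trans le_self_add
    · exact (hgB x hx).trans le_add_self
  exact (ENNReal.rpow_le_rpow hcap hs'.le).trans
    (ENNReal.lintegral_Lp_add_le hf.aemeasurable hg.aemeasurable hs)

theorem rieszCap_union_le_of_eq_zero (hs : 1 ≤ s) (A : Set (Rn n)) {N : Set (Rn n)}
    (hN : rieszCap n α s N = 0) : rieszCap n α s (A ∪ N) ≤ rieszCap n α s A := by
  have hs' : 0 < 1 / s := by positivity
  have h := rieszCap_union_rpow_le (α := α) hs A N
  rwa [hN, ENNReal.zero_rpow_of_pos hs', add_zero, ENNReal.rpow_le_rpow_iff hs'] at h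

theorem choquet_rpow_le_of_le_add (hs : 1 ≤ s) {q : ℝ} (hq : 0 < q) {g g₁ g₂ : Rn n → ℝ≥0∞}
    (h : g ≤ g₁ + g₂) (h₂ : choquet (rieszCap n α s) g₂ = 0) :
    choquet (rieszCap n α s) (fun x => g x ^ q) ≤
      choquet (rieszCap n α s) (fun x => (2 * g₁ x) ^ q) := by
  refine setLIntegral_mono' measurableSet_Ioi fun t (ht : 0 < t) => ?_
  set a := ENNReal.ofReal t ^ q⁻¹
  have ha : a / 2 ≠ 0 :=
    (ENNReal.div_pos (ENNReal.rpow_pos (ENNReal.ofReal_pos.mpr ht) ENNReal.ofReal_ne_top).ne'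
      ENNReal.ofNat_ne_top).ne'
  have hsub : {x | ENNReal.ofReal t < g x ^ q} ⊆
      {x | ENNReal.ofReal t < (2 * g₁ x) ^ q} ∪ {x | a / 2 < g₂ x} := by
    intro x (hx : ENNReal.ofReal t < g x ^ q)
    have hax : a < g x := (ENNReal.rpow_inv_lt_iff hq).mpr hx
    rcases le_total (g₂ x) (g₁ x) with h21 | h12
    · left
      have hg₁ : g x ≤ 2 * g₁ x := (h x).trans (two_mul (g₁ x) ▸ add_le_add le_rfl h21)
      exact hx.trans_le (ENNReal.rpow_le_rpow hg₁ hq.le)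
    · right
      have hg₂ : g x ≤ 2 * g₂ x := (h x).trans (two_mul (g₂ x) ▸ add_le_add h12 le_rfl)
      exact ENNReal.div_lt_of_lt_mul' (hax.trans_le hg₂)
  calc rieszCap n α s {x | ENNReal.ofReal t < g x ^ q}
      ≤ rieszCap n α s ({x | ENNReal.ofReal t < (2 * g₁ x) ^ q} ∪ {x | a / 2 < g₂ x}) :=
        monotone_rieszCap hsub
    _ ≤ rieszCap n α s {x | ENNReal.ofReal t < (2 * g₁ x) ^ q} :=
        rieszCap_union_le_of_eq_zero hs _
          (apply_setOf_lt_eq_zero_of_choquet_eq_zero monotone_rieszCap h₂ ha)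

end RieszCap

section Interpolation

variable {n : ℕ} {α s : ℝ}

theorem choquet_rieszPotential_rpow_le {q θ : ℝ} {C₁ C₂ C₃ : ℝ≥0∞} (hs : 0 < s) (hq : 0 < q)
    (hθ : θ ∈ Ioo 0 1) (hθq : 1 / q = (1 - θ) / s + θ)
    (ha : ∀ h v : Rn n → ℝ≥0∞, Measurable h → Measurable v →
      choquet (rieszCap n α s) v ≤ 1 →
      choquet (rieszCap n α s) (rieszPotential n α h) ≤
        C₁ * (∫⁻ x, h x ^ s * v x ^ (1 - s)) ^ (1 / s))
    (hb : ∀ h : Rn n → ℝ≥0∞, Measurable h →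
      choquet (rieszCap n α s) (fun x => rieszPotential n α h x ^ s) ≤ C₂ * ∫⁻ x, h x ^ s)
    (hc : ∀ u v : Rn n → ℝ≥0∞,
      choquet (rieszCap n α s) (fun x => u x ^ ((1 - θ) * q) * v x ^ (θ * q)) ≤
        C₃ * choquet (rieszCap n α s) (fun x => u x ^ s) ^ ((1 - θ) * q / s) *
          choquet (rieszCap n α s) v ^ (θ * q))
    {g w : Rn n → ℝ≥0∞} (hg : Measurable g) (hw : Measurable w)
    (hgw : ∀ᵐ y, g y ≠ 0 → w y ≠ 0 ∧ w y ≠ ⊤)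
    (hw1 : choquet (rieszCap n α s) (fun x => w x ^ q) ≤ 1) :
    choquet (rieszCap n α s) (fun x => rieszPotential n α g x ^ q) ≤
      C₃ * C₂ ^ ((1 - θ) * q / s) * C₁ ^ (θ * q) * (∫⁻ x, g x ^ s * w x ^ (q - s)) ^ (q / s) := by
  set D := ∫⁻ x, g x ^ s * w x ^ (q - s)
  set h₁ : Rn n → ℝ≥0∞ := fun y => g y * w y ^ ((q - s) / s)
  set h₂ : Rn n → ℝ≥0∞ := fun y => g y * w y ^ (q - 1)
  have he₁ : 0 ≤ (1 - θ) * q / s := div_nonneg (mul_nonneg (sub_nonneg.2 hθ.2.le) hq.le) hs.le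
  have he₂ : 0 ≤ θ * q := mul_nonneg hθ.1.le hq.le
  have hbc : (q - s) / s * (1 - θ) + (q - 1) * θ = 0 := by
    field_simp at hθq ⊢
    linarith
  have hD₁ : choquet (rieszCap n α s) (fun x => rieszPotential n α h₁ x ^ s) ≤ C₂ * D := by
    refine (hb h₁ (hg.mul (hw.pow_const _))).trans_eq (congrArg _ (lintegral_congr fun y => ?_))
    rw [ENNReal.mul_rpow_of_nonneg _ _ hs.le, ← ENNReal.rpow_mul, div_mul_cancel₀ _ hs.ne']
  have hD₂ : choquet (rieszCap n α s) (rieszPotential n α h₂) ≤ C₁ * D ^ (1 / s) := by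
    refine (ha h₂ _ (hg.mul (hw.pow_const _)) (hw.pow_const q) hw1).trans_eq ?_
    refine congrArg (C₁ * · ^ (1 / s)) (lintegral_congr_ae ?_)
    filter_upwards [hgw] with y hy
    by_cases hgy : g y = 0
    · simp [h₂, hgy, ENNReal.zero_rpow_of_pos hs]
    obtain ⟨hw0, hwt⟩ := hy hgy
    rw [ENNReal.mul_rpow_of_nonneg _ _ hs.le, ← ENNReal.rpow_mul, ← ENNReal.rpow_mul, mul_assoc,
      ← ENNReal.rpow_add _ _ hw0 hwt]
    ring_nf
  calc choquet (rieszCap n α s) (fun x => rieszPotential n α g x ^ q)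
      ≤ choquet (rieszCap n α s) (fun x =>
          rieszPotential n α h₁ x ^ ((1 - θ) * q) * rieszPotential n α h₂ x ^ (θ * q)) := by
        refine choquet_mono monotone_rieszCap fun x => ?_
        calc rieszPotential n α g x ^ q
            ≤ (rieszPotential n α h₁ x ^ (1 - θ) * rieszPotential n α h₂ x ^ θ) ^ q :=
              ENNReal.rpow_le_rpow (rieszPotential_le_rpow_mul_rpow hθ hbc hg hw hgw x) hq.le
          _ = _ := by
              rw [ENNReal.mul_rpow_of_nonneg _ _ hq.le, ← ENNReal.rpow_mul, ← ENNReal.rpow_mul]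
    _ ≤ C₃ * choquet (rieszCap n α s) (fun x => rieszPotential n α h₁ x ^ s) ^ ((1 - θ) * q / s) *
          choquet (rieszCap n α s) (rieszPotential n α h₂) ^ (θ * q) := hc _ _
    _ ≤ C₃ * (C₂ * D) ^ ((1 - θ) * q / s) * (C₁ * D ^ (1 / s)) ^ (θ * q) := by gcongr
    _ = C₃ * C₂ ^ ((1 - θ) * q / s) * C₁ ^ (θ * q) * D ^ (q / s) := by
        rw [ENNReal.mul_rpow_of_nonneg _ _ he₁, ENNReal.mul_rpow_of_nonneg _ _ he₂,
          ← ENNReal.rpow_mul, show q / s = (1 - θ) * q / s + 1 / s * (θ * q) by ring,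
          ENNReal.rpow_add_of_nonneg _ _ he₁ (mul_nonneg (by positivity) he₂)]
        ring

theorem choquet_rieszPotential_indicator_eq_top_eq_zero {C₁ : ℝ≥0∞} {q : ℝ} (hs : 1 < s)
    (hq : 0 < q) (ha : ∀ h v : Rn n → ℝ≥0∞, Measurable h → Measurable v →
      choquet (rieszCap n α s) v ≤ 1 →
      choquet (rieszCap n α s) (rieszPotential n α h) ≤
        C₁ * (∫⁻ x, h x ^ s * v x ^ (1 - s)) ^ (1 / s))
    {f w : Rn n → ℝ≥0∞} (hf : Measurable f) (hw : Measurable w)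
    (hw1 : choquet (rieszCap n α s) (fun x => w x ^ q) ≤ 1) :
    choquet (rieszCap n α s) (rieszPotential n α ({x | w x = ⊤}.indicator f)) = 0 := by
  have hzero : ∀ x, {x | w x = ⊤}.indicator f x ^ s * (w x ^ q) ^ (1 - s) = 0 := by
    intro x
    by_cases hx : w x = ⊤
    · rw [hx, ENNReal.top_rpow_of_pos hq, ENNReal.top_rpow_of_neg (by linarith), mul_zero]
    · rw [indicator_of_notMem (show x ∉ {x | w x = ⊤} from hx),
        ENNReal.zero_rpow_of_pos (by linarith), zero_mul]
  have h := ha ({x | w x = ⊤}.indicator f) _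
    (hf.indicator (measurableSet_eq_fun hw measurable_const)) (hw.pow_const q) hw1
  rwa [lintegral_congr hzero, lintegral_zero, ENNReal.zero_rpow_of_pos (by positivity), mul_zero,
    nonpos_iff_eq_zero] at h

theorem choquet_rieszPotential_rpow_le_indicator_ne_top {C₁ : ℝ≥0∞} {q : ℝ} (hs : 1 < s)
    (hq : 0 < q) (ha : ∀ h v : Rn n → ℝ≥0∞, Measurable h → Measurable v →
      choquet (rieszCap n α s) v ≤ 1 →
      choquet (rieszCap n α s) (rieszPotential n α h) ≤
        C₁ * (∫⁻ x, h x ^ s * v x ^ (1 - s)) ^ (1 / s))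
    {f w : Rn n → ℝ≥0∞} (hf : Measurable f) (hw : Measurable w)
    (hw1 : choquet (rieszCap n α s) (fun x => w x ^ q) ≤ 1) :
    choquet (rieszCap n α s) (fun x => rieszPotential n α f x ^ q) ≤
      choquet (rieszCap n α s)
        (fun x => rieszPotential n α (fun y => 2 * {x | w x = ⊤}ᶜ.indicator f y) x ^ q) := by
  have hf₁ : Measurable ({x | w x = ⊤}ᶜ.indicator f) :=
    hf.indicator (measurableSet_eq_fun hw measurable_const).compl
  have hsplit : rieszPotential n α f ≤ rieszPotential n α ({x | w x = ⊤}ᶜ.indicator f) +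
      rieszPotential n α ({x | w x = ⊤}.indicator f) := fun x => by
    rw [Pi.add_apply, ← rieszPotential_add hf₁, indicator_compl_add_self]
  simp_rw [rieszPotential_const_mul ENNReal.ofNat_ne_top]
  exact choquet_rpow_le_of_le_add hs.le hq hsplit
    (choquet_rieszPotential_indicator_eq_top_eq_zero hs hq ha hf hw hw1)

theorem ae_ne_zero_and_ne_top_of_lintegral_ne_top {q : ℝ} (hs : 0 < s) (hqs : q < s)
    {f w : Rn n → ℝ≥0∞} (hf : Measurable f) (hw : Measurable w)
    (hD : ∫⁻ x, f x ^ s * w x ^ (q - s) ≠ ⊤) :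
    ∀ᵐ y, {x | w x = ⊤}ᶜ.indicator f y ≠ 0 → w y ≠ 0 ∧ w y ≠ ⊤ := by
  filter_upwards [ae_lt_top ((hf.pow_const s).mul (hw.pow_const _)) hD]
    with y (hy : f y ^ s * w y ^ (q - s) < ⊤) hfy
  obtain ⟨hwt, hfy⟩ := indicator_apply_ne_zero.mp hfy
  refine ⟨fun hw0 => hy.ne ?_, hwt⟩
  rw [hw0, ENNReal.zero_rpow_of_neg (sub_neg.2 hqs), ENNReal.mul_top]
  exact (ENNReal.rpow_pos_of_nonneg (pos_iff_ne_zero.2 hfy) hs.le).ne'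

end Interpolation

theorem stmt6_general (n : ℕ) (α s q θ : ℝ)
    (hq : 1 < q) (hqs : q < s) (hθ : θ ∈ Set.Ioo (0 : ℝ) 1)
    (hθq : 1 / q = (1 - θ) / s + θ)
    (C₁ C₂ C₃ : ℝ≥0∞) (hC₁ : C₁ ≠ ⊤) (hC₂ : C₂ ≠ ⊤) (hC₃ : C₃ ≠ ⊤)
    -- (a) the case q = 1:
    (ha : ∀ h v : Rn n → ℝ≥0∞, Measurable h → Measurable v →
      choquet (rieszCap n α s) v ≤ 1 →
      choquet (rieszCap n α s) (rieszPotential n α h) ≤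
        C₁ * (∫⁻ x, h x ^ s * v x ^ (1 - s)) ^ (1 / s))
    -- (b) the case q = s (Maz'ya's capacitary strong type inequality):
    (hb : ∀ h : Rn n → ℝ≥0∞, Measurable h →
      choquet (rieszCap n α s) (fun x => rieszPotential n α h x ^ s) ≤ C₂ * ∫⁻ x, h x ^ s)
    -- (c) Hölder's inequality for the Choquet integral:
    (hc : ∀ u v : Rn n → ℝ≥0∞,
      choquet (rieszCap n α s) (fun x => u x ^ ((1 - θ) * q) * v x ^ (θ * q)) ≤
        C₃ * choquet (rieszCap n α s) (fun x => u x ^ s) ^ ((1 - θ) * q / s) *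
          choquet (rieszCap n α s) v ^ (θ * q)) :
    ∃ C : ℝ≥0∞, C ≠ ⊤ ∧ ∀ f w : Rn n → ℝ≥0∞, Measurable f → Measurable w →
      choquet (rieszCap n α s) (fun x => w x ^ q) ≤ 1 →
      choquet (rieszCap n α s) (fun x => rieszPotential n α f x ^ q) ^ (1 / q) ≤
        C * (∫⁻ x, f x ^ s * w x ^ (q - s)) ^ (1 / s) := by
  have hs : 1 < s := hq.trans hqs
  have hq0 : 0 < q := by linarith
  have hs0 : 0 < s := by linarith
  set K := C₃ * C₂ ^ ((1 - θ) * q / s) * C₁ ^ (θ * q)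
  have hK : K ≠ ⊤ := by
    have he₁ : 0 ≤ (1 - θ) * q / s := div_nonneg (mul_nonneg (sub_nonneg.2 hθ.2.le) hq0.le) hs0.le
    have he₂ : 0 ≤ θ * q := mul_nonneg hθ.1.le hq0.le
    apply_rules [ENNReal.mul_ne_top, ENNReal.rpow_ne_top_of_nonneg]
  -- the `+ 1` keeps `C ≠ 0`, so that the bound is trivial when the weighted integral is infinite
  refine ⟨2 * K ^ (1 / q) + 1, ?_, fun f w hf hw hw1 => ?_⟩
  · finiteness
  set D := ∫⁻ x, f x ^ s * w x ^ (q - s)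
  rcases eq_or_ne D ⊤ with hD | hD
  · rw [hD, ENNReal.top_rpow_of_pos (by positivity), ENNReal.mul_top (by simp)]
    exact le_top
  set g := fun y => 2 * {x | w x = ⊤}ᶜ.indicator f y
  have hsupp : ∀ᵐ y, g y ≠ 0 → w y ≠ 0 ∧ w y ≠ ⊤ :=
    (ae_ne_zero_and_ne_top_of_lintegral_ne_top hs0 hqs hf hw hD).mono
      fun y hy h2 => hy (right_ne_zero_of_mul h2)
  have hexp : ∀ X Y : ℝ≥0∞,
      (X * (2 ^ s * Y) ^ (q / s)) ^ (1 / q) = 2 * X ^ (1 / q) * Y ^ (1 / s) := fun X Y => by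
    rw [ENNReal.mul_rpow_of_nonneg _ _ (by positivity), ← ENNReal.rpow_mul,
      show q / s * (1 / q) = 1 / s by field_simp, ENNReal.mul_rpow_of_nonneg _ _ (by positivity),
      ← ENNReal.rpow_mul, mul_one_div_cancel hs0.ne', ENNReal.rpow_one]
    ring
  calc choquet (rieszCap n α s) (fun x => rieszPotential n α f x ^ q) ^ (1 / q)
      ≤ choquet (rieszCap n α s) (fun x => rieszPotential n α g x ^ q) ^ (1 / q) := by
        gcongr
        exact choquet_rieszPotential_rpow_le_indicator_ne_top hs hq0 ha hf hw hw1
    _ ≤ (K * (2 ^ s * D) ^ (q / s)) ^ (1 / q) := by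
        gcongr
        exact (choquet_rieszPotential_rpow_le hs0 hq0 hθ hθq ha hb hc
          ((hf.indicator (measurableSet_eq_fun hw measurable_const).compl).const_mul 2) hw hsupp
          hw1).trans
          (by gcongr; exact lintegral_const_mul_indicator_rpow_mul_le _ hs0.le ofNat_ne_top _ f w)
    _ = 2 * K ^ (1 / q) * D ^ (1 / s) := hexp K D
    _ ≤ _ := by gcongr; exact le_self_add

/-- interpolation between the endpoint cases q = 1 and q = s of the weighted
capacitary strong type inequality. -/
theorem stmt6 (n : ℕ) (α s q θ : ℝ) (hs : 1 < s) (hα : 0 < α) (hαn : α < n / s)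
    (hq : 1 < q) (hqs : q < s) (hθ : θ ∈ Set.Ioo (0 : ℝ) 1)
    (hθq : 1 / q = (1 - θ) / s + θ)
    (C₁ C₂ C₃ : ℝ≥0∞) (hC₁ : C₁ ≠ ⊤) (hC₂ : C₂ ≠ ⊤) (hC₃ : C₃ ≠ ⊤)
    -- (a) the case q = 1:
    (ha : ∀ h v : Rn n → ℝ≥0∞, Measurable h → Measurable v →
      choquet (rieszCap n α s) v ≤ 1 →
      choquet (rieszCap n α s) (rieszPotential n α h) ≤
        C₁ * (∫⁻ x, h x ^ s * v x ^ (1 - s)) ^ (1 / s))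
    -- (b) the case q = s (Maz'ya's capacitary strong type inequality):
    (hb : ∀ h : Rn n → ℝ≥0∞, Measurable h →
      choquet (rieszCap n α s) (fun x => rieszPotential n α h x ^ s) ≤ C₂ * ∫⁻ x, h x ^ s)
    -- (c) Hölder's inequality for the Choquet integral:
    (hc : ∀ u v : Rn n → ℝ≥0∞,
      choquet (rieszCap n α s) (fun x => u x ^ ((1 - θ) * q) * v x ^ (θ * q)) ≤
        C₃ * choquet (rieszCap n α s) (fun x => u x ^ s) ^ ((1 - θ) * q / s) *
          choquet (rieszCap n α s) v ^ (θ * q)) :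
    ∃ C : ℝ≥0∞, C ≠ ⊤ ∧ ∀ f w : Rn n → ℝ≥0∞, Measurable f → Measurable w →
      choquet (rieszCap n α s) (fun x => w x ^ q) ≤ 1 →
      choquet (rieszCap n α s) (fun x => rieszPotential n α f x ^ q) ^ (1 / q) ≤
        C * (∫⁻ x, f x ^ s * w x ^ (q - s)) ^ (1 / s) :=
  stmt6_general n α s q θ hq hqs hθ hθq C₁ C₂ C₃ hC₁ hC₂ hC₃ ha hb hc
end
end

section
/- Let s > 1, 0 < α < n/s, and 0 < r ≤ s. Define B as the set of quasi-everywhere defined functions u for which there exists f ∈ L^s(ℝⁿ), f ≥ 0, with ‖f‖_{L^s} < 1 and I_α f ≥ |u|^{1/r} quasi-everywhere. Then B is convex: if u₁, u₂ ∈ B and λ ∈ (0,1), then λu₁ + (1-λ)u₂ ∈ B. -/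
open MeasureTheory ENNReal Set Filter

noncomputable section

/-- The set B: q.e. defined functions u dominated q.e. by I_α f with ‖f‖_{L^s} < 1. -/
def inB (n : ℕ) (α s r : ℝ) (u : Rn n → ℝ≥0∞) : Prop :=
  ∃ f : Rn n → ℝ≥0∞, Measurable f ∧ (∫⁻ y, f y ^ s) < 1 ∧
    rieszCap n α s {x | rieszPotential n α f x < u x ^ (1 / r)} = 0

/-!
Given `f₁, f₂` witnessing `u₁, u₂ ∈ B`, take `g = (λ f₁ ^ s + (1 - λ) f₂ ^ s) ^ (1 / s)`, so that
`‖g‖ₛ ^ s = λ ‖f₁‖ₛ ^ s + (1 - λ) ‖f₂‖ₛ ^ s < 1`. Minkowski's inequality, read in the reverse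
direction (proved by Hölder duality), gives `(I_α g) ^ s ≥ λ (I_α f₁) ^ s + (1 - λ) (I_α f₂) ^ s`
pointwise; combined with convexity of `t ↦ t ^ (s / r)` this yields
`I_α g ≥ (λ u₁ + (1 - λ) u₂) ^ (1 / r)` outside the union of the two exceptional sets, which has
capacity zero by subadditivity of the capacity.
-/

namespace ENNReal

lemma mul_add_mul_le_Lp_mul_Lq {p q : ℝ} (hpq : p.HolderConjugate q) (x₁ x₂ y₁ y₂ : ℝ≥0∞) :
    x₁ * y₁ + x₂ * y₂ ≤ (x₁ ^ p + x₂ ^ p) ^ p⁻¹ * (y₁ ^ q + y₂ ^ q) ^ q⁻¹ := by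
  simpa [Fin.sum_univ_succ] using inner_le_Lp_mul_Lq Finset.univ ![x₁, x₂] ![y₁, y₂] hpq

lemma le_rpow_of_le_mul_rpow {p q : ℝ} (hpq : p.HolderConjugate q) {M T : ℝ≥0∞} (hM : M ≠ ⊤)
    (h : M ≤ T * M ^ q⁻¹) : M ≤ T ^ p := by
  rcases eq_or_ne M 0 with rfl | hM0
  · exact zero_le
  have hMq0 : M ^ q⁻¹ ≠ 0 := by simp [hM0, hM, hpq.symm.pos, hpq.symm.pos.not_gt]
  have hMqt : M ^ q⁻¹ ≠ ⊤ := rpow_ne_top_of_nonneg (inv_nonneg.2 hpq.symm.nonneg) hM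
  have hsplit : M = M ^ p⁻¹ * M ^ q⁻¹ := by
    rw [← rpow_add _ _ hM0 hM, hpq.inv_add_inv_eq_one, rpow_one]
  have hroot : M ^ p⁻¹ ≤ T := by
    rw [← ENNReal.mul_le_mul_iff_left hMq0 hMqt, ← hsplit]
    exact h
  simpa [hpq.ne_zero] using rpow_le_rpow hroot hpq.nonneg

lemma mul_add_mul_lt_of_lt {w₁ w₂ a b c : ℝ≥0∞} (hw : w₁ + w₂ = 1) (ha : a < c)
    (hb : b < c) : w₁ * a + w₂ * b < c :=
  calc w₁ * a + w₂ * b ≤ w₁ * max a b + w₂ * max a b := by gcongr <;> simp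
    _ = max a b := by rw [← add_mul, hw, one_mul]
    _ < c := max_lt ha hb

lemma rpow_one_div_mean_rpow_le {r s : ℝ} (hr : 0 < r) (hrs : r ≤ s) {w₁ w₂ : ℝ≥0∞}
    (hw : w₁ + w₂ = 1) (u₁ u₂ : ℝ≥0∞) :
    ((w₁ * u₁ + w₂ * u₂) ^ (1 / r)) ^ s ≤ w₁ * (u₁ ^ (1 / r)) ^ s + w₂ * (u₂ ^ (1 / r)) ^ s := by
  simp only [← rpow_mul, one_div_mul_eq_div]
  exact rpow_arith_mean_le_arith_mean2_rpow w₁ w₂ u₁ u₂ hw ((one_le_div hr).2 hrs)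

end ENNReal

theorem rpow_lintegral_add_rpow_lintegral_le {X : Type*} [MeasurableSpace X] (μ : Measure X)
    {p : ℝ} (hp : 1 ≤ p) {φ ψ : X → ℝ≥0∞} (hφ : Measurable φ) (hψ : Measurable ψ) :
    (∫⁻ x, φ x ∂μ) ^ p + (∫⁻ x, ψ x ∂μ) ^ p ≤ (∫⁻ x, (φ x ^ p + ψ x ^ p) ^ p⁻¹ ∂μ) ^ p := by
  rcases hp.eq_or_lt with rfl | hp
  · simp [lintegral_add_left hφ]
  set a := ∫⁻ x, φ x ∂μ
  set b := ∫⁻ x, ψ x ∂μ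
  set T := ∫⁻ x, (φ x ^ p + ψ x ^ p) ^ p⁻¹ ∂μ
  have hp0 : 0 < p := zero_lt_one.trans hp
  have haT : a ≤ T := lintegral_mono fun x => by
    simpa [hp0.ne'] using rpow_le_rpow (le_self_add : φ x ^ p ≤ _) (inv_nonneg.2 hp0.le)
  have hbT : b ≤ T := lintegral_mono fun x => by
    simpa [hp0.ne'] using rpow_le_rpow (le_add_self : ψ x ^ p ≤ _) (inv_nonneg.2 hp0.le)
  rcases eq_or_ne T ⊤ with hT | hT
  · simp [hT, hp0]
  have ha : a ≠ ⊤ := ne_top_of_le_ne_top hT haT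
  have hb : b ≠ ⊤ := ne_top_of_le_ne_top hT hbT
  set q := p.conjExponent
  have hpq : p.HolderConjugate q := .conjExponent hp
  -- the Hölder dual of `(a, b)` is `(a ^ (p - 1), b ^ (p - 1))`
  have hdual : ∀ c : ℝ≥0∞, c ≠ ⊤ → c * c ^ (p - 1) = c ^ p := fun c hc => by
    rcases eq_or_ne c 0 with rfl | hc0
    · simp [hp0]
    · nth_rw 1 [← rpow_one c]
      rw [← rpow_add _ _ hc0 hc, add_sub_cancel]
  have hq : (p - 1) * q = p := by
    have : p - 1 ≠ 0 := sub_ne_zero.2 hp.ne'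
    simp only [q, Real.conjExponent]
    field_simp
  refine le_rpow_of_le_mul_rpow hpq (by finiteness) ?_
  calc a ^ p + b ^ p = ∫⁻ x, φ x * a ^ (p - 1) + ψ x * b ^ (p - 1) ∂μ := by
        rw [lintegral_add_left (hφ.mul_const _), lintegral_mul_const _ hφ,
          lintegral_mul_const _ hψ, hdual a ha, hdual b hb]
    _ ≤ ∫⁻ x, (φ x ^ p + ψ x ^ p) ^ p⁻¹ * (a ^ p + b ^ p) ^ q⁻¹ ∂μ := lintegral_mono fun x => by
        simpa only [← rpow_mul, hq] using
          mul_add_mul_le_Lp_mul_Lq hpq (φ x) (ψ x) (a ^ (p - 1)) (b ^ (p - 1))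
    _ = T * (a ^ p + b ^ p) ^ q⁻¹ :=
        lintegral_mul_const' _ _
          (rpow_ne_top_of_nonneg (inv_nonneg.2 hpq.symm.nonneg) (by finiteness))

theorem weighted_rpow_lintegral_mul_add_le {X : Type*} [MeasurableSpace X] (μ : Measure X)
    {p : ℝ} (hp : 1 ≤ p) (w₁ w₂ : ℝ≥0∞) {k f₁ f₂ : X → ℝ≥0∞} (hk : Measurable k)
    (hf₁ : Measurable f₁) (hf₂ : Measurable f₂) :
    w₁ * (∫⁻ x, k x * f₁ x ∂μ) ^ p + w₂ * (∫⁻ x, k x * f₂ x ∂μ) ^ p ≤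
      (∫⁻ x, k x * (w₁ * f₁ x ^ p + w₂ * f₂ x ^ p) ^ p⁻¹ ∂μ) ^ p := by
  have hp0 : 0 ≤ p := zero_le_one.trans hp
  have hscale : ∀ (w c : ℝ≥0∞), (w ^ p⁻¹ * c) ^ p = w * c ^ p := fun w c => by
    rw [mul_rpow_of_nonneg _ _ hp0, rpow_inv_rpow (by positivity)]
  have hmix : ∀ x, (w₁ * (k x * f₁ x) ^ p + w₂ * (k x * f₂ x) ^ p) ^ p⁻¹ =
      k x * (w₁ * f₁ x ^ p + w₂ * f₂ x ^ p) ^ p⁻¹ := fun x => by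
    simp only [mul_rpow_of_nonneg _ _ hp0]
    rw [show w₁ * (k x ^ p * f₁ x ^ p) + w₂ * (k x ^ p * f₂ x ^ p) =
        k x ^ p * (w₁ * f₁ x ^ p + w₂ * f₂ x ^ p) by ring,
      mul_rpow_of_nonneg _ _ (by positivity), rpow_rpow_inv (by positivity)]
  have hint : ∀ (w : ℝ≥0∞) {f : X → ℝ≥0∞}, Measurable f →
      ∫⁻ x, w * (k x * f x) ∂μ = w * ∫⁻ x, k x * f x ∂μ := fun w _ hf =>
    lintegral_const_mul w (hk.mul hf)
  simpa only [Pi.mul_apply, hint _ hf₁, hint _ hf₂, hscale, hmix] using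
    rpow_lintegral_add_rpow_lintegral_le μ hp
      ((hk.mul hf₁).const_mul (w₁ ^ p⁻¹)) ((hk.mul hf₂).const_mul (w₂ ^ p⁻¹))

lemma measurable_rieszKernel (n : ℕ) (α : ℝ) (x : Rn n) :
    Measurable fun y : Rn n => ENNReal.ofReal (‖x - y‖ ^ (α - (n : ℝ))) := by
  fun_prop

lemma rieszPotential_mono {n : ℕ} {α : ℝ} {f g : Rn n → ℝ≥0∞} (h : f ≤ g) (x : Rn n) :
    rieszPotential n α f x ≤ rieszPotential n α g x := by
  unfold rieszPotential
  gcongr with y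
  exact h y

theorem weighted_rpow_rieszPotential_add_le {n : ℕ} {α s : ℝ} (hs : 1 ≤ s) (w₁ w₂ : ℝ≥0∞)
    {f₁ f₂ : Rn n → ℝ≥0∞} (hf₁ : Measurable f₁) (hf₂ : Measurable f₂) (x : Rn n) :
    w₁ * rieszPotential n α f₁ x ^ s + w₂ * rieszPotential n α f₂ x ^ s ≤
      rieszPotential n α (fun y => (w₁ * f₁ y ^ s + w₂ * f₂ y ^ s) ^ s⁻¹) x ^ s := by
  have key := weighted_rpow_lintegral_mul_add_le volume hs w₁ w₂
    (measurable_rieszKernel n α x) hf₁ hf₂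
  simp only [rieszPotential, ENNReal.mul_rpow_of_nonneg _ _ (zero_le_one.trans hs)]
  convert mul_le_mul_right key (ENNReal.ofReal (rieszConst n α) ^ s) using 1
  ring

lemma rieszCap_mono {n : ℕ} {α s : ℝ} {E F : Set (Rn n)} (h : E ⊆ F) :
    rieszCap n α s E ≤ rieszCap n α s F :=
  le_iInf₂ fun f hf => iInf₂_le f ⟨hf.1, fun x hx => hf.2 x (h hx)⟩

lemma rieszCap_union_le {n : ℕ} {α s : ℝ} (E₁ E₂ : Set (Rn n)) :
    rieszCap n α s (E₁ ∪ E₂) ≤ rieszCap n α s E₁ + rieszCap n α s E₂ := by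
  refine ENNReal.le_iInf_add_iInf fun f₁ f₂ => ENNReal.le_iInf_add_iInf fun hf₁ hf₂ => ?_
  have hadm : Measurable (f₁ ⊔ f₂) ∧ ∀ x ∈ E₁ ∪ E₂, 1 ≤ rieszPotential n α (f₁ ⊔ f₂) x := by
    refine ⟨hf₁.1.sup hf₂.1, ?_⟩
    rintro x (hx | hx)
    · exact (hf₁.2 x hx).trans (rieszPotential_mono le_sup_left x)
    · exact (hf₂.2 x hx).trans (rieszPotential_mono le_sup_right x)
  calc rieszCap n α s (E₁ ∪ E₂) ≤ ∫⁻ y, (f₁ ⊔ f₂) y ^ s := iInf₂_le (f₁ ⊔ f₂) hadm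
    _ ≤ ∫⁻ y, f₁ y ^ s + f₂ y ^ s := lintegral_mono fun y => by
        rcases le_total (f₁ y) (f₂ y) with h | h <;> simp [h]
    _ = (∫⁻ y, f₁ y ^ s) + ∫⁻ y, f₂ y ^ s := lintegral_add_left (hf₁.1.pow_const s) _

theorem stmt8_general (n : ℕ) (α s r : ℝ) (hs : 1 < s)
    (hr : 0 < r) (hrs : r ≤ s)
    (u₁ u₂ : Rn n → ℝ≥0∞) (hu₁ : inB n α s r u₁) (hu₂ : inB n α s r u₂)
    (l : ℝ) (hl : l ∈ Set.Ioo (0 : ℝ) 1) :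
    inB n α s r (fun x => ENNReal.ofReal l * u₁ x + ENNReal.ofReal (1 - l) * u₂ x) := by
  obtain ⟨f₁, hf₁, hint₁, hcap₁⟩ := hu₁
  obtain ⟨f₂, hf₂, hint₂, hcap₂⟩ := hu₂
  set w₁ := ENNReal.ofReal l
  set w₂ := ENNReal.ofReal (1 - l)
  have hw : w₁ + w₂ = 1 := by
    rw [← ENNReal.ofReal_add hl.1.le (by linarith [hl.2]), add_sub_cancel, ENNReal.ofReal_one]
  have hs0 : 0 < s := by linarith
  refine ⟨fun y => (w₁ * f₁ y ^ s + w₂ * f₂ y ^ s) ^ s⁻¹, by fun_prop, ?_, ?_⟩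
  · simp only [ENNReal.rpow_inv_rpow hs0.ne']
    rw [lintegral_add_left (by fun_prop), lintegral_const_mul _ (by fun_prop),
      lintegral_const_mul _ (by fun_prop)]
    exact mul_add_mul_lt_of_lt hw hint₁ hint₂
  refine le_antisymm ?_ zero_le
  calc _ ≤ rieszCap n α s ({x | rieszPotential n α f₁ x < u₁ x ^ (1 / r)} ∪
          {x | rieszPotential n α f₂ x < u₂ x ^ (1 / r)}) := rieszCap_mono fun x hx => ?_
    _ ≤ _ := rieszCap_union_le _ _
    _ = 0 := by rw [hcap₁, hcap₂, add_zero]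
  by_contra hgood
  simp only [mem_union, mem_ofPred_eq, not_or, not_lt] at hgood
  refine absurd hx (not_lt.2 ((rpow_le_rpow_iff hs0).1 ?_))
  calc _ ≤ w₁ * (u₁ x ^ (1 / r)) ^ s + w₂ * (u₂ x ^ (1 / r)) ^ s :=
        rpow_one_div_mean_rpow_le hr hrs hw _ _
    _ ≤ w₁ * rieszPotential n α f₁ x ^ s + w₂ * rieszPotential n α f₂ x ^ s := by
        gcongr
        exacts [hgood.1, hgood.2]
    _ ≤ _ := weighted_rpow_rieszPotential_add_le hs.le w₁ w₂ hf₁ hf₂ x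

/-- the set B is convex. -/
theorem stmt8 (n : ℕ) (α s r : ℝ) (hs : 1 < s) (hα : 0 < α) (hαn : α < n / s)
    (hr : 0 < r) (hrs : r ≤ s)
    (u₁ u₂ : Rn n → ℝ≥0∞) (hu₁ : inB n α s r u₁) (hu₂ : inB n α s r u₂)
    (l : ℝ) (hl : l ∈ Set.Ioo (0 : ℝ) 1) :
    inB n α s r (fun x => ENNReal.ofReal l * u₁ x + ENNReal.ofReal (1 - l) * u₂ x) :=
  stmt8_general n α s r hs hr hrs u₁ u₂ hu₁ hu₂ l hl
end
end

section
/- Let μ be a nonnegative locally finite Borel measure on ℝⁿ, s > 1, 0 < α < n/s, 0 < r < s. If ∫ (I_α h)^r dμ ≤ A ‖h‖_{L^s}^r for all nonnegative h ∈ L^s(ℝⁿ), then μ is absolutely continuous with respect to the Riesz capacity cap_{α,s}: every set N with cap_{α,s}(N) = 0 is μ-measurable (for the completion of μ) with μ(N) = 0. -/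
/-!
Markov's inequality turns the trace inequality into `μ N ≤ A ‖f‖_s^r` for every `f` with
`I_α f ≥ 1` on `N`, and taking the infimum over such `f` gives `μ N ≤ A cap_{α,s}(N)^{r/s}`.
Since `μ N` is the outer measure of `N`, no `G_δ` hull of `N` is needed.
-/

open MeasureTheory ENNReal Set Filter

noncomputable section

theorem measurable_rieszPotential {n : ℕ} {α : ℝ} {f : Rn n → ℝ≥0∞} (hf : Measurable f) :
    Measurable (rieszPotential n α f) :=
  Measurable.const_mul (Measurable.lintegral_prod_right
    (((measurable_fst.sub measurable_snd).norm.pow_const _).ennreal_ofReal.mul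
      (hf.comp measurable_snd))) _

theorem measure_le_lintegral_rieszPotential_rpow {n : ℕ} {α r : ℝ} (hr : 0 < r)
    (μ : Measure (Rn n)) {f : Rn n → ℝ≥0∞} (hf : Measurable f) {N : Set (Rn n)}
    (hN : ∀ x ∈ N, 1 ≤ rieszPotential n α f x) :
    μ N ≤ ∫⁻ x, rieszPotential n α f x ^ r ∂μ :=
  meas_le_lintegral₀ ((measurable_rieszPotential hf).pow_const r).aemeasurable
    fun x hx => one_le_rpow (hN x hx) hr

theorem measure_le_mul_rieszCap_rpow {n : ℕ} {α s r : ℝ} (hs : 0 ≤ s) (hr : 0 < r)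
    (μ : Measure (Rn n)) {A : ℝ≥0∞} (hA : A ≠ ⊤)
    (htr : ∀ h : Rn n → ℝ≥0∞, Measurable h →
      (∫⁻ x, rieszPotential n α h x ^ r ∂μ) ≤ A * (∫⁻ y, h y ^ s) ^ (r / s))
    {N : Set (Rn n)} (hN : rieszCap n α s N ≠ ⊤) :
    μ N ≤ A * rieszCap n α s N ^ (r / s) := by
  have hmono : Monotone fun c : ℝ≥0∞ => A * c ^ (r / s) := fun _ _ hc =>
    mul_le_mul_right (rpow_le_rpow hc (div_nonneg hr.le hs)) A
  have hcont : Continuous fun c : ℝ≥0∞ => A * c ^ (r / s) :=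
    (ENNReal.continuous_const_mul hA).comp ENNReal.continuous_rpow_const
  rw [rieszCap, iInf_subtype'] at hN ⊢
  -- `hN` supplies an admissible `f`; without one the bound fails for `A = 0`, as `0 * ⊤ = 0`.
  have : Nonempty {f : Rn n → ℝ≥0∞ // Measurable f ∧ ∀ x ∈ N, 1 ≤ rieszPotential n α f x} :=
    not_isEmpty_iff.mp fun _ => hN (iInf_of_empty _)
  refine (le_iInf fun ⟨f, hf, hfN⟩ => ?_).trans_eq
    (hmono.map_ciInf_of_continuousAt hcont.continuousAt).symm
  exact (measure_le_lintegral_rieszPotential_rpow hr μ hf hfN).trans (htr f hf)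

theorem stmt16_general (n : ℕ) (α s r : ℝ) (hs : 1 < s)
    (hr : 0 < r)
    (μ : Measure (Rn n)) (A : ℝ≥0∞) (hA : A ≠ ⊤)
    (htr : ∀ h : Rn n → ℝ≥0∞, Measurable h →
      (∫⁻ x, rieszPotential n α h x ^ r ∂μ) ≤ A * (∫⁻ y, h y ^ s) ^ (r / s)) :
    ∀ N : Set (Rn n), rieszCap n α s N = 0 → μ N = 0 := by
  intro N hN
  have hs₀ : 0 < s := zero_lt_one.trans hs
  have hbound := measure_le_mul_rieszCap_rpow hs₀.le hr μ hA htr (hN.trans_ne zero_ne_top)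
  rwa [hN, zero_rpow_of_pos (div_pos hr hs₀), mul_zero, nonpos_iff_eq_zero] at hbound

/-- the trace inequality implies that μ vanishes on capacity-null sets. -/
theorem stmt16 (n : ℕ) (α s r : ℝ) (hs : 1 < s) (hα : 0 < α) (hαn : α < n / s)
    (hr : 0 < r) (hrs : r < s)
    (μ : Measure (Rn n)) [IsLocallyFiniteMeasure μ] (A : ℝ≥0∞) (hA : A ≠ ⊤)
    (htr : ∀ h : Rn n → ℝ≥0∞, Measurable h →
      (∫⁻ x, rieszPotential n α h x ^ r ∂μ) ≤ A * (∫⁻ y, h y ^ s) ^ (r / s)) :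
    ∀ N : Set (Rn n), rieszCap n α s N = 0 → μ N = 0 :=
  stmt16_general n α s r hs hr μ A hA htr
end
end

section
/- Let p > 1 with p' = p/(p-1), and let w = ‖{c_j}‖_{ℓ¹}^{-1} Σ_j |c_j| w_j, where {c_j} ∈ ℓ¹ with not all c_j zero and w_j are nonnegative measurable functions. Then for any measurable functions b_j and g = Σ_j c_j b_j (a.e. absolutely convergent), the pointwise inequality |g|^{p'} w^{1-p'} ≤ ‖{c_j}‖_{ℓ¹}^{p'-1} Σ_j |c_j| |b_j|^{p'} w_j^{1-p'} holds a.e. (with the convention that |b|^{p'} v^{1-p'} = 0 when b = 0, and = +∞ when b ≠ 0 and v = 0). -/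
open MeasureTheory ENNReal Set Filter

noncomputable section

/-! Write `W = ∑ |c_j| w_j` and `R = ∑ |c_j| |b_j|^{p'} w_j^{1-p'}`. Hölder's inequality applied to
`|c_j| |b_j| = (|c_j| w_j)^{1/p} · (|c_j|^{1/p'} |b_j| w_j^{-1/p})` gives
`∑ |c_j| |b_j| ≤ W^{1/p} R^{1/p'}`, i.e. `(∑ |c_j| |b_j|)^{p'} W^{1-p'} ≤ R`, and `|g| ≤ ∑ |c_j| |b_j|`.
The normalisation by `‖c‖_{ℓ¹}` contributes the same factor `‖c‖_{ℓ¹}^{p'-1}` to both sides.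
The splitting breaks down only at terms with `w_j ∈ {0, ∞}`, and there either `R = ∞` or `W = ∞`. -/

namespace ENNReal

theorem inner_le_Lp_mul_Lq_tsum {ι : Type*} (f g : ι → ℝ≥0∞) {p q : ℝ}
    (hpq : p.HolderConjugate q) :
    ∑' i, f i * g i ≤ (∑' i, f i ^ p) ^ (1 / p) * (∑' i, g i ^ q) ^ (1 / q) := by
  let _ : MeasurableSpace ι := ⊤
  simpa only [lintegral_count, Pi.mul_apply] using
    lintegral_mul_le_Lp_mul_Lq Measure.count hpq (f := f) (g := g)
      measurable_from_top.aemeasurable measurable_from_top.aemeasurable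

theorem mul_eq_rpow_mul_mul_rpow {p q : ℝ} (hpq : p.HolderConjugate q) {a B v : ℝ≥0∞}
    (hv : a ≠ 0 → B ≠ 0 → v ≠ 0 ∧ v ≠ ⊤) :
    a * B = (a * v) ^ (1 / p) * (a ^ (1 / q) * B * v ^ (-(1 / p))) := by
  rcases eq_or_ne a 0 with rfl | ha
  · simp [zero_rpow_of_pos, hpq.pos, hpq.symm.pos]
  rcases eq_or_ne B 0 with rfl | hB
  · simp
  obtain ⟨hv0, hvt⟩ := hv ha hB
  calc a * B = (a ^ (1 / p) * a ^ (1 / q)) * (v ^ (1 / p) * v ^ (-(1 / p))) * B := by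
        rw [← rpow_add_of_nonneg _ _ (by simp [hpq.nonneg]) (by simp [hpq.symm.nonneg]),
          ← rpow_add _ _ hv0 hvt, hpq.one_div_add_one_div, add_neg_cancel, div_one, rpow_one,
          rpow_zero, mul_one]
    _ = _ := by rw [mul_rpow_of_nonneg _ _ (by simp [hpq.nonneg])]; ring

theorem tsum_mul_le_rpow_tsum_mul_mul_rpow_tsum {ι : Type*} {p q : ℝ} (hpq : p.HolderConjugate q)
    (a B v : ι → ℝ≥0∞) (hv : ∀ i, a i ≠ 0 → B i ≠ 0 → v i ≠ 0 ∧ v i ≠ ⊤) :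
    ∑' i, a i * B i ≤
      (∑' i, a i * v i) ^ (1 / p) * (∑' i, a i * (B i ^ q * v i ^ (1 - q))) ^ (1 / q) := by
  calc ∑' i, a i * B i
      = ∑' i, (a i * v i) ^ (1 / p) * (a i ^ (1 / q) * B i * v i ^ (-(1 / p))) :=
        tsum_congr fun i => mul_eq_rpow_mul_mul_rpow hpq (hv i)
    _ ≤ _ := inner_le_Lp_mul_Lq_tsum _ _ hpq
    _ = _ := by
        congr 3 <;> funext i
        · rw [← rpow_mul, one_div_mul_cancel hpq.ne_zero, rpow_one]
        · rw [mul_rpow_of_nonneg _ _ hpq.symm.nonneg, mul_rpow_of_nonneg _ _ hpq.symm.nonneg,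
            ← rpow_mul, ← rpow_mul, one_div_mul_cancel hpq.symm.ne_zero, rpow_one,
            neg_mul, one_div_mul_eq_div, hpq.symm.div_conj_eq_sub_one, neg_sub, mul_assoc]

theorem rpow_mul_rpow_one_sub_le {p q : ℝ} (hpq : p.HolderConjugate q) {T W R : ℝ≥0∞}
    (hW : W ≠ ⊤) (h : T ≤ W ^ (1 / p) * R ^ (1 / q)) : T ^ q * W ^ (1 - q) ≤ R := by
  rcases eq_or_ne W 0 with rfl | hW0
  · rw [zero_rpow_of_pos (by simp [hpq.pos]), zero_mul, nonpos_iff_eq_zero] at h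
    simp [h, zero_rpow_of_pos hpq.symm.pos]
  calc T ^ q * W ^ (1 - q) ≤ (W ^ (1 / p) * R ^ (1 / q)) ^ q * W ^ (1 - q) := by
        gcongr
        exact hpq.symm.nonneg
    _ = R * W ^ (1 / p * q + (1 - q)) := by
        rw [mul_rpow_of_nonneg _ _ hpq.symm.nonneg, ← rpow_mul, ← rpow_mul,
          one_div_mul_cancel hpq.symm.ne_zero, rpow_one, rpow_add _ _ hW0 hW]
        ring
    _ = R := by
        rw [one_div_mul_eq_div, hpq.symm.div_conj_eq_sub_one, sub_add_sub_cancel, sub_self,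
          rpow_zero, mul_one]

theorem rpow_tsum_mul_mul_rpow_tsum_mul_le {ι : Type*} {q : ℝ} (hq : 1 < q) (a B v : ι → ℝ≥0∞) :
    (∑' i, a i * B i) ^ q * (∑' i, a i * v i) ^ (1 - q) ≤
      ∑' i, a i * (B i ^ q * v i ^ (1 - q)) := by
  have hpq : (q.conjExponent).HolderConjugate q := (Real.HolderConjugate.conjExponent hq).symm
  have hneg : 1 - q < 0 := by linarith
  rcases eq_or_ne (∑' i, a i * v i) ⊤ with hW | hW
  · simp [hW, top_rpow_of_neg hneg]
  by_cases hdeg : ∃ i, a i ≠ 0 ∧ B i ≠ 0 ∧ v i = 0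
  · obtain ⟨i, ha, hB, hv⟩ := hdeg
    have hterm : a i * (B i ^ q * v i ^ (1 - q)) = ⊤ := by
      rw [hv, zero_rpow_of_neg hneg, mul_top, mul_top ha]
      simp [rpow_eq_zero_iff, hB, hpq.symm.pos.not_gt]
    exact le_top.trans (hterm ▸ ENNReal.le_tsum i)
  push Not at hdeg
  refine rpow_mul_rpow_one_sub_le hpq hW (tsum_mul_le_rpow_tsum_mul_mul_rpow_tsum hpq a B v ?_)
  refine fun i ha hB => ⟨hdeg i ha hB, fun hvt => hW ?_⟩
  rw [← top_le_iff, ← mul_top ha, ← hvt]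
  exact ENNReal.le_tsum i

end ENNReal

theorem stmt19_general (n : ℕ) (p : ℝ) (hp : 1 < p)
    (c : ℕ → ℝ) (hc0 : (∑' j, |c j|) ≠ 0)
    (w : ℕ → Rn n → ℝ≥0∞) (b : ℕ → Rn n → ℝ) (g : Rn n → ℝ)
    (hg : ∀ᵐ x, g x = ∑' j, c j * b j x) :
    ∀ᵐ x : Rn n,
      ENNReal.ofReal |g x| ^ (p / (p - 1)) *
          ((ENNReal.ofReal (∑' j, |c j|))⁻¹ *
            ∑' j, ENNReal.ofReal |c j| * w j x) ^ (1 - p / (p - 1)) ≤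
        ENNReal.ofReal (∑' j, |c j|) ^ (p / (p - 1) - 1) *
          ∑' j, ENNReal.ofReal |c j| *
            (ENNReal.ofReal |b j x| ^ (p / (p - 1)) * w j x ^ (1 - p / (p - 1))) := by
  filter_upwards [hg] with x hgx
  set q := p / (p - 1)
  set S := ENNReal.ofReal (∑' j, |c j|)
  have hq : 1 < q := (Real.HolderConjugate.conjExponent hp).symm.lt
  have hS : S ≠ 0 := by
    simpa [S] using (tsum_nonneg fun j => abs_nonneg (c j)).lt_of_ne' hc0
  have hg_le : ENNReal.ofReal |g x| ≤ ∑' j, ENNReal.ofReal |c j| * ENNReal.ofReal |b j x| := by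
    simpa only [hgx, ← Real.enorm_eq_ofReal_abs, enorm_mul] using
      enorm_tsum_le_tsum_enorm (f := fun j => c j * b j x)
  calc _ = S ^ (q - 1) *
        (ENNReal.ofReal |g x| ^ q * (∑' j, ENNReal.ofReal |c j| * w j x) ^ (1 - q)) := by
        rw [ENNReal.mul_rpow_eq_ite, if_neg (by simp [hS, S]), ENNReal.inv_rpow,
          ← ENNReal.rpow_neg, neg_sub]
        ring
    _ ≤ S ^ (q - 1) * ((∑' j, ENNReal.ofReal |c j| * ENNReal.ofReal |b j x|) ^ q *
          (∑' j, ENNReal.ofReal |c j| * w j x) ^ (1 - q)) := by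
        gcongr
    _ ≤ _ := by
        gcongr
        exact ENNReal.rpow_tsum_mul_mul_rpow_tsum_mul_le hq _ _ _

/-- pointwise Hölder estimate: with w = ‖{c_j}‖_{ℓ¹}^{-1} Σ |c_j| w_j and
g = Σ c_j b_j a.e. (absolutely convergent), a.e.
|g|^{p'} w^{1-p'} ≤ ‖{c_j}‖_{ℓ¹}^{p'-1} Σ_j |c_j| |b_j|^{p'} w_j^{1-p'}. -/
theorem stmt19 (n : ℕ) (p : ℝ) (hp : 1 < p)
    (c : ℕ → ℝ) (hc : Summable fun j => |c j|) (hc0 : (∑' j, |c j|) ≠ 0)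
    (w : ℕ → Rn n → ℝ≥0∞) (b : ℕ → Rn n → ℝ) (g : Rn n → ℝ)
    (habs : ∀ᵐ x, Summable fun j => |c j| * |b j x|)
    (hg : ∀ᵐ x, g x = ∑' j, c j * b j x) :
    ∀ᵐ x : Rn n,
      ENNReal.ofReal |g x| ^ (p / (p - 1)) *
          ((ENNReal.ofReal (∑' j, |c j|))⁻¹ *
            ∑' j, ENNReal.ofReal |c j| * w j x) ^ (1 - p / (p - 1)) ≤
        ENNReal.ofReal (∑' j, |c j|) ^ (p / (p - 1) - 1) *
          ∑' j, ENNReal.ofReal |c j| *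
            (ENNReal.ofReal |b j x| ^ (p / (p - 1)) * w j x ^ (1 - p / (p - 1))) :=
  stmt19_general n p hp c hc0 w b g hg
end
end
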